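/- arXiv:2410.05043 — 7 statements merged into one kernel-verified Lean document; each statement's English description precedes it below -/
import Mathlib

section
/- The restriction of the map 𝐟 to the open set 𝐄 is an open map: for every open subset U ⊆ 𝐄 of ℂⁿ, the image 𝐟(U) is open in ℂⁿ. -/
open Finset

set_option maxHeartbeats 1600000
set_option synthInstance.maxHeartbeats 400000

/-- The set `𝐄` of tuples of nonzero, pairwise distinct complex numbers. -/
def Eset (n : ℕ) : Set (Fin n → ℂ) :=
  {e | (∀ j, e j ≠ 0) ∧ Function.Injective e}

/-- The polynomial map `𝐟`, `𝐟_j(e) = e_j ∏_{k≠j} (e_j - e_k)`. -/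
def fmap (n : ℕ) (e : Fin n → ℂ) : Fin n → ℂ :=
  fun j => e j * ∏ k ∈ Finset.univ.erase j, (e j - e k)

namespace FmapOpen

variable {n : ℕ}

/-- Component `j` of the derivative of `fmap` at `e`. -/
noncomputable def Dcomp (e : Fin n → ℂ) (j : Fin n) : (Fin n → ℂ) →L[ℂ] ℂ :=
  e j • (∑ k ∈ Finset.univ.erase j,
      (∏ i ∈ (Finset.univ.erase j).erase k, (e j - e i)) •
        (ContinuousLinearMap.proj (R := ℂ) (φ := fun _ : Fin n => ℂ) j
          - ContinuousLinearMap.proj k))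
    + (∏ k ∈ Finset.univ.erase j, (e j - e k)) •
        ContinuousLinearMap.proj (R := ℂ) (φ := fun _ : Fin n => ℂ) j

/-- The derivative of `fmap` at `e`. -/
noncomputable def Dmap (e : Fin n → ℂ) : (Fin n → ℂ) →L[ℂ] (Fin n → ℂ) :=
  ContinuousLinearMap.pi (Dcomp e)

theorem hasStrictFDerivAt (e : Fin n → ℂ) :
    HasStrictFDerivAt (fmap n) (Dmap e) e := by
  apply hasStrictFDerivAt_pi''
  intro j
  rw [Dmap, ContinuousLinearMap.proj_pi]
  have h1 : HasStrictFDerivAt (fun x : Fin n → ℂ => x j)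
      (ContinuousLinearMap.proj (R := ℂ) (φ := fun _ : Fin n => ℂ) j) e :=
    hasStrictFDerivAt_apply j e
  have hprod : HasStrictFDerivAt
      (fun x : Fin n → ℂ => ∏ k ∈ Finset.univ.erase j, (x j - x k))
      (∑ k ∈ Finset.univ.erase j,
        (∏ i ∈ (Finset.univ.erase j).erase k, (e j - e i)) •
          (ContinuousLinearMap.proj (R := ℂ) (φ := fun _ : Fin n => ℂ) j
            - ContinuousLinearMap.proj k)) e :=
    HasStrictFDerivAt.finset_prod fun k _ => h1.sub (hasStrictFDerivAt_apply k e)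
  exact h1.mul hprod

theorem Dmap_apply (e v : Fin n → ℂ) (j : Fin n) :
    Dmap e v j = e j * (∑ k ∈ Finset.univ.erase j,
        (∏ i ∈ (Finset.univ.erase j).erase k, (e j - e i)) * (v j - v k))
      + (∏ k ∈ Finset.univ.erase j, (e j - e k)) * v j := by
  simp [Dmap, Dcomp, ContinuousLinearMap.sum_apply, mul_comm]

/-- The key algebraic identity: the image of the vector `(e_i^m)_i` under the
derivative. -/
theorem key (e : Fin n → ℂ) (m : ℕ) (j : Fin n) :
    Dmap e (fun i => e i ^ m) j
      = (∏ k ∈ Finset.univ.erase j, (e j - e k)) *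
          ((1 - (m : ℂ)) * e j ^ m
            + ∑ a ∈ Finset.range m, (∑ l, e l ^ (m - 1 - a)) * e j ^ (a + 1)) := by
  set P : ℂ := ∏ k ∈ Finset.univ.erase j, (e j - e k) with hP
  rw [Dmap_apply]
  have h1 : ∀ k ∈ Finset.univ.erase j,
      (∏ i ∈ (Finset.univ.erase j).erase k, (e j - e i)) * (e j ^ m - e k ^ m)
        = P * ∑ a ∈ Finset.range m, e j ^ a * e k ^ (m - 1 - a) := by
    intro k hk
    have hprod : (e j - e k) * ∏ i ∈ (Finset.univ.erase j).erase k, (e j - e i) = P :=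
      Finset.mul_prod_erase (Finset.univ.erase j) (fun i => e j - e i) hk
    calc (∏ i ∈ (Finset.univ.erase j).erase k, (e j - e i)) * (e j ^ m - e k ^ m)
        = (∏ i ∈ (Finset.univ.erase j).erase k, (e j - e i)) *
            ((∑ a ∈ Finset.range m, e j ^ a * e k ^ (m - 1 - a)) * (e j - e k)) := by
          rw [geom_sum₂_mul]
      _ = ((e j - e k) * ∏ i ∈ (Finset.univ.erase j).erase k, (e j - e i)) *
            ∑ a ∈ Finset.range m, e j ^ a * e k ^ (m - 1 - a) := by ring
      _ = P * ∑ a ∈ Finset.range m, e j ^ a * e k ^ (m - 1 - a) := by rw [hprod]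
  rw [Finset.sum_congr rfl h1, ← Finset.mul_sum, Finset.sum_comm]
  have h2 : ∀ a ∈ Finset.range m,
      ∑ k ∈ Finset.univ.erase j, e j ^ a * e k ^ (m - 1 - a)
        = e j ^ a * ((∑ l, e l ^ (m - 1 - a)) - e j ^ (m - 1 - a)) := by
    intro a _
    rw [← Finset.mul_sum]
    congr 1
    exact eq_sub_of_add_eq' (Finset.add_sum_erase Finset.univ
      (fun k => e k ^ (m - 1 - a)) (Finset.mem_univ j))
  rw [Finset.sum_congr rfl h2]
  have h3 : e j * (P * ∑ a ∈ Finset.range m,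
        e j ^ a * ((∑ l, e l ^ (m - 1 - a)) - e j ^ (m - 1 - a)))
      = P * ∑ a ∈ Finset.range m,
        e j * (e j ^ a * ((∑ l, e l ^ (m - 1 - a)) - e j ^ (m - 1 - a))) := by
    rw [Finset.mul_sum, Finset.mul_sum]
    ring_nf
    rw [Finset.mul_sum]
    congr 1; funext a; ring
  have h4 : ∀ a ∈ Finset.range m,
      e j * (e j ^ a * ((∑ l, e l ^ (m - 1 - a)) - e j ^ (m - 1 - a)))
        = (∑ l, e l ^ (m - 1 - a)) * e j ^ (a + 1) - e j ^ m := by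
    intro a ha
    have hm : a + 1 + (m - 1 - a) = m := by
      have := Finset.mem_range.mp ha; omega
    have : e j ^ (a + 1) * e j ^ (m - 1 - a) = e j ^ m := by
      rw [← pow_add, hm]
    calc e j * (e j ^ a * ((∑ l, e l ^ (m - 1 - a)) - e j ^ (m - 1 - a)))
        = (∑ l, e l ^ (m - 1 - a)) * e j ^ (a + 1)
            - e j ^ (a + 1) * e j ^ (m - 1 - a) := by ring
      _ = (∑ l, e l ^ (m - 1 - a)) * e j ^ (a + 1) - e j ^ m := by rw [this]
  rw [h3, Finset.sum_congr rfl h4, Finset.sum_sub_distrib, Finset.sum_const,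
    Finset.card_range, nsmul_eq_mul]
  ring

theorem prod_ne_zero {e : Fin n → ℂ} (he : e ∈ Eset n) (j : Fin n) :
    (∏ k ∈ Finset.univ.erase j, (e j - e k)) ≠ 0 :=
  Finset.prod_ne_zero_iff.mpr fun k hk => sub_ne_zero.mpr fun h =>
    (Finset.ne_of_mem_erase hk) (he.2 h).symm

theorem fmap_ne_zero {e : Fin n → ℂ} (he : e ∈ Eset n) (j : Fin n) :
    fmap n e j ≠ 0 :=
  mul_ne_zero (he.1 j) (prod_ne_zero he j)

theorem wmem (e : Fin n → ℂ) : ∀ m : ℕ, 1 ≤ m → m ≤ n →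
    (fun j => (∏ k ∈ Finset.univ.erase j, (e j - e k)) * e j ^ m)
      ∈ LinearMap.range (Dmap e).toLinearMap := by
  intro m
  induction m using Nat.strong_induction_on with
  | _ m IH =>
    intro hm1 hm2
    set T := LinearMap.range (Dmap e).toLinearMap with hT
    obtain ⟨m', rfl⟩ : ∃ m', m = m' + 1 := ⟨m - 1, by omega⟩
    have hc : ((n : ℂ) + 1 - (m' + 1 : ℕ)) ≠ 0 := by
      intro h
      have h2 : ((n + 1 : ℕ) : ℂ) = ((m' + 1 : ℕ) : ℂ) := by
        push_cast
        push_cast at h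
        linear_combination h
      have h3 : n + 1 = m' + 1 := Nat.cast_injective h2
      omega
    have hkey : Dmap e (fun i => e i ^ (m' + 1)) = fun j =>
        ((n : ℂ) + 1 - (m' + 1 : ℕ)) *
            ((∏ k ∈ Finset.univ.erase j, (e j - e k)) * e j ^ (m' + 1))
          + ∑ a ∈ Finset.range m', (∑ l, e l ^ (m' + 1 - 1 - a)) *
              ((∏ k ∈ Finset.univ.erase j, (e j - e k)) * e j ^ (a + 1)) := by
      funext j
      rw [key, Finset.sum_range_succ]
      have h0 : (m' + 1 - 1 - m' : ℕ) = 0 := by omega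
      rw [h0]
      simp only [pow_zero]
      rw [Finset.sum_const, Finset.card_univ, Fintype.card_fin, nsmul_eq_mul, mul_one]
      push_cast
      have hdist : ∑ x ∈ Finset.range m', (∑ l, e l ^ (m' - x)) *
          ((∏ k ∈ Finset.univ.erase j, (e j - e k)) * e j ^ (x + 1))
          = (∏ k ∈ Finset.univ.erase j, (e j - e k)) *
            ∑ x ∈ Finset.range m', (∑ l, e l ^ (m' - x)) * e j ^ (x + 1) := by
        rw [Finset.mul_sum]
        exact Finset.sum_congr rfl fun a _ => by ring
      rw [hdist]
      ring
    have hin : Dmap e (fun i => e i ^ (m' + 1)) ∈ T :=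
      LinearMap.mem_range_self _ _
    have hsum : (fun j => ∑ a ∈ Finset.range m', (∑ l, e l ^ (m' + 1 - 1 - a)) *
        ((∏ k ∈ Finset.univ.erase j, (e j - e k)) * e j ^ (a + 1))) ∈ T := by
      have heq : (fun j => ∑ a ∈ Finset.range m', (∑ l, e l ^ (m' + 1 - 1 - a)) *
          ((∏ k ∈ Finset.univ.erase j, (e j - e k)) * e j ^ (a + 1)))
          = ∑ a ∈ Finset.range m', (∑ l, e l ^ (m' + 1 - 1 - a)) •
              (fun j => (∏ k ∈ Finset.univ.erase j, (e j - e k)) * e j ^ (a + 1)) := by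
        funext j
        simp [Finset.sum_apply]
      rw [heq]
      refine Submodule.sum_mem _ fun a ha => Submodule.smul_mem _ _ ?_
      have ha' := Finset.mem_range.mp ha
      exact IH (a + 1) (by omega) (by omega) (by omega)
    have hcw : ((n : ℂ) + 1 - (m' + 1 : ℕ)) •
        (fun j => (∏ k ∈ Finset.univ.erase j, (e j - e k)) * e j ^ (m' + 1)) ∈ T := by
      have h1 := Submodule.sub_mem T hin hsum
      have h2 : Dmap e (fun i => e i ^ (m' + 1))
          - (fun j => ∑ a ∈ Finset.range m', (∑ l, e l ^ (m' + 1 - 1 - a)) *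
              ((∏ k ∈ Finset.univ.erase j, (e j - e k)) * e j ^ (a + 1)))
          = ((n : ℂ) + 1 - (m' + 1 : ℕ)) •
            (fun j => (∏ k ∈ Finset.univ.erase j, (e j - e k)) * e j ^ (m' + 1)) := by
        funext j
        rw [Pi.sub_apply, hkey]
        simp [smul_eq_mul]
      rwa [h2] at h1
    have h3 := Submodule.smul_mem T (((n : ℂ) + 1 - (m' + 1 : ℕ))⁻¹) hcw
    rwa [smul_smul, inv_mul_cancel₀ hc, one_smul] at h3

theorem dmap_surjective {e : Fin n → ℂ} (he : e ∈ Eset n) :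
    Function.Surjective (Dmap e) := by
  intro y
  set W : Matrix (Fin n) (Fin n) ℂ :=
    Matrix.of (fun j b : Fin n => fmap n e j * e j ^ (b : ℕ)) with hWdef
  have hW : W = Matrix.diagonal (fmap n e) * Matrix.vandermonde e := by
    ext j b
    simp [hWdef, Matrix.diagonal_mul, Matrix.vandermonde]
  have hdet : IsUnit W.det := by
    rw [isUnit_iff_ne_zero, hW, Matrix.det_mul, Matrix.det_diagonal,
      Matrix.det_vandermonde]
    refine mul_ne_zero (Finset.prod_ne_zero_iff.mpr fun j _ => fmap_ne_zero he j) ?_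
    refine Finset.prod_ne_zero_iff.mpr fun i _ => Finset.prod_ne_zero_iff.mpr
      fun j hj => sub_ne_zero.mpr fun h => ?_
    have : j = i := he.2 h
    have := Finset.mem_Ioi.mp hj
    omega
  set c : Fin n → ℂ := W⁻¹.mulVec y with hcdef
  have hc : W.mulVec c = y := by
    rw [hcdef, Matrix.mulVec_mulVec, Matrix.mul_nonsing_inv _ hdet, Matrix.one_mulVec]
  have hy : y = ∑ b : Fin n, c b •
      (fun j => (∏ k ∈ Finset.univ.erase j, (e j - e k)) * e j ^ ((b : ℕ) + 1)) := by
    funext j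
    rw [← hc]
    simp only [Matrix.mulVec, dotProduct, Finset.sum_apply, Pi.smul_apply,
      smul_eq_mul, hWdef, Matrix.of_apply, fmap]
    refine Finset.sum_congr rfl fun b _ => ?_
    rw [pow_succ]
    ring
  have hmem : y ∈ LinearMap.range (Dmap e).toLinearMap := by
    rw [hy]
    refine Submodule.sum_mem _ fun b _ => Submodule.smul_mem _ _ ?_
    exact wmem e ((b : ℕ) + 1) (by omega) (by have := b.isLt; omega)
  obtain ⟨v, hv⟩ := hmem
  exact ⟨v, hv⟩

theorem dmap_bijective {e : Fin n → ℂ} (he : e ∈ Eset n) :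
    Function.Bijective (Dmap e).toLinearMap := by
  have hsurj : Function.Surjective (Dmap e).toLinearMap := dmap_surjective he
  exact ⟨LinearMap.injective_iff_surjective.mpr hsurj, hsurj⟩

/-- The derivative as a continuous linear equivalence. -/
noncomputable def Deq {e : Fin n → ℂ} (he : e ∈ Eset n) :
    (Fin n → ℂ) ≃L[ℂ] (Fin n → ℂ) :=
  (LinearEquiv.ofBijective (Dmap e).toLinearMap (dmap_bijective he)).toContinuousLinearEquiv

theorem Deq_coe {e : Fin n → ℂ} (he : e ∈ Eset n) :
    ((Deq he : (Fin n → ℂ) ≃L[ℂ] (Fin n → ℂ)) :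
      (Fin n → ℂ) →L[ℂ] (Fin n → ℂ)) = Dmap e := by
  ext v
  simp [Deq]

end FmapOpen

/-- the restriction of `𝐟` to `𝐄` is an open map: the image of every
open subset `U ⊆ 𝐄` of `ℂⁿ` is open in `ℂⁿ`. -/
theorem fmap_isOpenMap_on_E (n : ℕ) (hn : 1 ≤ n) (U : Set (Fin n → ℂ))
    (hU : IsOpen U) (hUE : U ⊆ Eset n) :
    IsOpen (fmap n '' U) := by
  rw [isOpen_iff_mem_nhds]
  rintro y ⟨x, hx, rfl⟩
  have he := hUE hx
  have hd : HasStrictFDerivAt (fmap n)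
      ((FmapOpen.Deq he : (Fin n → ℂ) ≃L[ℂ] (Fin n → ℂ)) :
        (Fin n → ℂ) →L[ℂ] (Fin n → ℂ)) x := by
    rw [FmapOpen.Deq_coe he]
    exact FmapOpen.hasStrictFDerivAt x
  have hmap := hd.map_nhds_eq_of_equiv
  have himg : fmap n '' U ∈ Filter.map (fmap n) (nhds x) :=
    Filter.image_mem_map (hU.mem_nhds hx)
  rwa [hmap] at himg
end

section
/- For every integer n ≥ 1 and every e = (e_1, …, e_n) ∈ ℂⁿ, let M be the n×n complex matrix with off-diagonal entries M_{jk} = −e_j · ∏_{ℓ≠j,k}(e_j − e_ℓ) for k ≠ j, and diagonal entries M_{jj} = ∏_{k≠j}(e_j − e_k) + ∑_{k≠j} e_j · ∏_{ℓ≠j,k}(e_j − e_ℓ), all indices running over {1,…,n}. Then det M = n! · ∏_{j≠k}(e_j − e_k), the product running over all ordered pairs (j,k) with j ≠ k. (In particular det M ≠ 0 whenever the e_j are pairwise distinct.) -/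
open Finset

variable {R : Type*} [CommRing R]

def Mmat (n : ℕ) (x : Fin n → R) : Matrix (Fin n) (Fin n) R :=
  Matrix.of fun j k : Fin n =>
    if k = j then
      (∏ l ∈ Finset.univ.erase j, (x j - x l)) +
        ∑ m ∈ Finset.univ.erase j, x j * ∏ l ∈ (Finset.univ.erase j).erase m, (x j - x l)
    else
      -(x j * ∏ l ∈ (Finset.univ.erase j).erase k, (x j - x l))

def dd (n : ℕ) (x : Fin n → R) (j : Fin n) : R := ∏ l ∈ Finset.univ.erase j, (x j - x l)

def pp (n : ℕ) (x : Fin n → R) (r : ℕ) : R := ∑ k, x k ^ r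

def uu (n : ℕ) (x : Fin n → R) (M t : ℕ) : R :=
  if t = M then (if M = 0 then 1 else ((n + 1 - M : ℕ) : R))
  else if t < M ∧ 0 < t then pp n x (M - t) else 0

def Umat (n : ℕ) (x : Fin n → R) : Matrix (Fin n) (Fin n) R :=
  Matrix.of fun s m : Fin n => uu n x (m : ℕ) (s : ℕ)

lemma pp_zero (n : ℕ) (x : Fin n → R) : pp n x 0 = (n : R) := by
  simp [pp]

lemma inner_nat (n : ℕ) (x : Fin n → R) (j : Fin n) (M : ℕ) (hMn : M < n) :
    x j ^ M + x j * ∑ k ∈ univ.erase j, ∑ i ∈ Finset.range M,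
        x j ^ i * x k ^ (M - 1 - i)
      = ∑ t ∈ Finset.range n, x j ^ t * uu n x M t := by
  have hsub : ∑ t ∈ Finset.range (M + 1), x j ^ t * uu n x M t
      = ∑ t ∈ Finset.range n, x j ^ t * uu n x M t := by
    apply Finset.sum_subset (Finset.range_subset_range.2 hMn)
    intro t ht hnot
    have h1 : M < t := by
      simp only [Finset.mem_range, not_lt] at hnot
      omega
    have : uu n x M t = 0 := by
      unfold uu
      rw [if_neg (by omega), if_neg (by omega)]
    rw [this, mul_zero]
  rw [← hsub, Finset.sum_range_succ]
  have huM : uu n x M M = if M = 0 then 1 else ((n + 1 - M : ℕ) : R) := by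
    unfold uu; rw [if_pos rfl]
  rw [huM]
  have hsmall : ∑ t ∈ Finset.range M, x j ^ t * uu n x M t
      = ∑ t ∈ Finset.range M, (if 0 < t then x j ^ t * pp n x (M - t) else 0) := by
    apply Finset.sum_congr rfl
    intro t ht
    rw [Finset.mem_range] at ht
    unfold uu
    rw [if_neg (by omega)]
    by_cases h0 : 0 < t
    · rw [if_pos ⟨ht, h0⟩, if_pos h0]
    · rw [if_neg (by tauto), if_neg h0, mul_zero]
  rw [hsmall]
  rcases Nat.eq_zero_or_pos M with hM0 | hMpos
  · subst hM0; simp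
  rw [if_neg (by omega)]
  rw [Finset.sum_comm]
  have hswap : x j * ∑ i ∈ Finset.range M, ∑ k ∈ univ.erase j, x j ^ i * x k ^ (M - 1 - i)
      = ∑ i ∈ Finset.range M, x j ^ (i + 1) * (pp n x (M - 1 - i) - x j ^ (M - 1 - i)) := by
    rw [Finset.mul_sum]
    apply Finset.sum_congr rfl
    intro i hi
    rw [← Finset.mul_sum, Finset.sum_erase_eq_sub (Finset.mem_univ j), ← pp]
    ring
  rw [hswap]
  have hsplit : ∑ i ∈ Finset.range M, x j ^ (i + 1) * (pp n x (M - 1 - i) - x j ^ (M - 1 - i))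
      = (∑ i ∈ Finset.range M, x j ^ (i + 1) * pp n x (M - 1 - i)) - (M : R) * x j ^ M := by
    simp only [mul_sub]
    rw [Finset.sum_sub_distrib]
    congr 1
    have : ∀ i ∈ Finset.range M, x j ^ (i + 1) * x j ^ (M - 1 - i) = x j ^ M := by
      intro i hi
      rw [Finset.mem_range] at hi
      rw [← pow_add]
      congr 1
      omega
    rw [Finset.sum_congr rfl this, Finset.sum_const, Finset.card_range, nsmul_eq_mul]
  rw [hsplit]
  have hrefl : ∑ i ∈ Finset.range M, x j ^ (i + 1) * pp n x (M - 1 - i)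
      = ∑ t ∈ Finset.range M, x j ^ (M - t) * pp n x t := by
    rw [← Finset.sum_range_reflect (fun t => x j ^ (M - t) * pp n x t) M]
    apply Finset.sum_congr rfl
    intro i hi
    rw [Finset.mem_range] at hi
    congr 2
    omega
  rw [hrefl]
  obtain ⟨N, rfl⟩ : ∃ N, M = N + 1 := ⟨M - 1, by omega⟩
  rw [Finset.sum_range_succ' (fun t => x j ^ (N + 1 - t) * pp n x t) N,
      Finset.sum_range_succ' (fun t => if 0 < t then x j ^ t * pp n x (N + 1 - t) else 0) N]
  simp only [Nat.sub_zero, pp_zero, if_neg (lt_irrefl 0)]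
  have hB : ∑ t ∈ Finset.range N, x j ^ (N + 1 - (t + 1)) * pp n x (t + 1)
      = ∑ t ∈ Finset.range N, (if 0 < t + 1 then x j ^ (t + 1) * pp n x (N + 1 - (t + 1)) else 0) := by
    rw [← Finset.sum_range_reflect
      (fun t => if 0 < t + 1 then x j ^ (t + 1) * pp n x (N + 1 - (t + 1)) else 0) N]
    apply Finset.sum_congr rfl
    intro i hi
    rw [Finset.mem_range] at hi
    rw [if_pos (Nat.succ_pos _)]
    congr 2
    · omega
    · omega
  rw [hB]
  have hcast : ((n + 1 - (N + 1) : ℕ) : R) = (n : R) - (N : R) := by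
    have h2 : n + 1 - (N + 1) = n - N := by omega
    rw [h2, Nat.cast_sub (by omega)]
  rw [hcast]
  push_cast
  ring

lemma inner_id (n : ℕ) (x : Fin n → R) (j m : Fin n) :
    x j ^ (m : ℕ) + x j * ∑ k ∈ univ.erase j, ∑ i ∈ Finset.range (m : ℕ),
        x j ^ i * x k ^ ((m : ℕ) - 1 - i)
      = ∑ s : Fin n, x j ^ (s : ℕ) * Umat n x s m := by
  have hrhs : (∑ s : Fin n, x j ^ (s : ℕ) * Umat n x s m)
      = ∑ t ∈ Finset.range n, x j ^ t * uu n x (m : ℕ) t :=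
    Fin.sum_univ_eq_sum_range (fun t => x j ^ t * uu n x (m : ℕ) t) n
  rw [hrhs]
  exact inner_nat n x j (m : ℕ) m.isLt

lemma key (n : ℕ) (x : Fin n → R) :
    Mmat n x * Matrix.vandermonde x
      = Matrix.diagonal (dd n x) * (Matrix.vandermonde x * Umat n x) := by
  ext j m
  rw [Matrix.diagonal_mul, Matrix.mul_apply, Matrix.mul_apply]
  simp only [Matrix.vandermonde_apply]
  have h1 : ∑ k, Mmat n x j k * x k ^ (m : ℕ)
      = Mmat n x j j * x j ^ (m : ℕ)
        + ∑ k ∈ univ.erase j, Mmat n x j k * x k ^ (m : ℕ) :=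
    (Finset.add_sum_erase univ (fun k => Mmat n x j k * x k ^ (m : ℕ)) (mem_univ j)).symm
  rw [h1]
  have hdiag : Mmat n x j j
      = dd n x j + ∑ k ∈ univ.erase j, x j * ∏ l ∈ (univ.erase j).erase k, (x j - x l) := by
    simp [Mmat, dd]
  have hoff : ∑ k ∈ univ.erase j, Mmat n x j k * x k ^ (m : ℕ)
      = ∑ k ∈ univ.erase j,
          (-(x j * ∏ l ∈ (univ.erase j).erase k, (x j - x l))) * x k ^ (m : ℕ) := by
    apply Finset.sum_congr rfl
    intro k hk
    have : k ≠ j := Finset.ne_of_mem_erase hk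
    simp [Mmat, this]
  rw [hdiag, hoff]
  have h2 : (dd n x j + ∑ k ∈ univ.erase j, x j * ∏ l ∈ (univ.erase j).erase k, (x j - x l))
          * x j ^ (m : ℕ)
        + ∑ k ∈ univ.erase j,
            (-(x j * ∏ l ∈ (univ.erase j).erase k, (x j - x l))) * x k ^ (m : ℕ)
      = dd n x j * x j ^ (m : ℕ)
        + ∑ k ∈ univ.erase j,
            (x j * ∏ l ∈ (univ.erase j).erase k, (x j - x l))
              * (x j ^ (m : ℕ) - x k ^ (m : ℕ)) := by
    rw [add_mul, Finset.sum_mul, add_assoc, ← Finset.sum_add_distrib]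
    congr 1
    apply Finset.sum_congr rfl
    intro k hk
    ring
  rw [h2]
  have h3 : ∑ k ∈ univ.erase j,
        (x j * ∏ l ∈ (univ.erase j).erase k, (x j - x l))
          * (x j ^ (m : ℕ) - x k ^ (m : ℕ))
      = ∑ k ∈ univ.erase j,
          dd n x j * (x j * ∑ i ∈ Finset.range (m : ℕ), x j ^ i * x k ^ ((m : ℕ) - 1 - i)) := by
    apply Finset.sum_congr rfl
    intro k hk
    rw [← geom_sum₂_mul (x j) (x k) (m : ℕ)]
    have hP : (x j - x k) * ∏ l ∈ (univ.erase j).erase k, (x j - x l) = dd n x j :=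
      Finset.mul_prod_erase (univ.erase j) (fun l => x j - x l) hk
    rw [← hP]
    ring
  rw [h3, ← Finset.mul_sum, ← Finset.mul_sum, ← mul_add, inner_id]

lemma prod_nat (n : ℕ) : ∏ i ∈ Finset.range n, (if i = 0 then 1 else n + 1 - i) = n.factorial := by
  rcases n with _ | m
  · simp
  rw [Finset.prod_range_succ' (fun i => if i = 0 then 1 else m + 1 + 1 - i) m]
  rw [if_pos rfl, mul_one]
  have h1 : ∀ i ∈ Finset.range m, (if i + 1 = 0 then 1 else m + 1 + 1 - (i + 1)) = m + 1 - i := by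
    intro i hi
    rw [if_neg (Nat.succ_ne_zero i)]
    omega
  rw [Finset.prod_congr rfl h1]
  have h2 : ∏ i ∈ Finset.range m, (m + 1 - i) = ∏ i ∈ Finset.range m, (i + 2) := by
    rw [← Finset.prod_range_reflect (fun i => i + 2) m]
    apply Finset.prod_congr rfl
    intro i hi
    rw [Finset.mem_range] at hi
    omega
  rw [h2]
  have h3 : ∏ i ∈ Finset.range (m + 1), (i + 1) = (∏ i ∈ Finset.range m, (i + 2)) * 1 :=
    Finset.prod_range_succ' (fun i => i + 1) m
  rw [mul_one] at h3
  rw [← h3, Finset.prod_range_add_one_eq_factorial]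

lemma detU (n : ℕ) (x : Fin n → R) : (Umat n x).det = (n.factorial : R) := by
  have htri : (Umat n x).BlockTriangular id := by
    intro s m hlt
    simp only [id] at hlt
    have h1 : (m : ℕ) < (s : ℕ) := hlt
    unfold Umat uu
    simp only [Matrix.of_apply]
    rw [if_neg (by omega), if_neg (by omega)]
  rw [Matrix.det_of_upperTriangular htri]
  have : ∀ s : Fin n, Umat n x s s = (if (s:ℕ) = 0 then 1 else ((n + 1 - (s:ℕ) : ℕ) : R)) := by
    intro s
    unfold Umat uu
    simp
  rw [Finset.prod_congr rfl (fun s _ => this s)]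
  rw [Fin.prod_univ_eq_prod_range (fun t => if t = 0 then (1:R) else ((n + 1 - t : ℕ) : R)) n]
  have : ∀ t ∈ Finset.range n, (if t = 0 then (1:R) else ((n + 1 - t : ℕ) : R))
      = (((if t = 0 then 1 else n + 1 - t : ℕ)) : R) := by
    intro t _
    split <;> simp
  rw [Finset.prod_congr rfl this, ← Nat.cast_prod, prod_nat]

lemma detM_poly (n : ℕ) :
    (Mmat n (MvPolynomial.X : Fin n → MvPolynomial (Fin n) ℂ)).det
      = (n.factorial : MvPolynomial (Fin n) ℂ)
        * ∏ j, dd n (MvPolynomial.X : Fin n → MvPolynomial (Fin n) ℂ) j := by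
  set X : Fin n → MvPolynomial (Fin n) ℂ := MvPolynomial.X with hX
  have hdet := congrArg Matrix.det (key n X)
  rw [Matrix.det_mul, Matrix.det_mul, Matrix.det_mul, Matrix.det_diagonal, detU] at hdet
  have hV : (Matrix.vandermonde X).det ≠ 0 := by
    rw [Matrix.det_vandermonde]
    apply Finset.prod_ne_zero_iff.2
    intro i _
    apply Finset.prod_ne_zero_iff.2
    intro j hj
    rw [Finset.mem_Ioi] at hj
    exact sub_ne_zero.2 (MvPolynomial.X_injective.ne hj.ne')
  have h2 : (Mmat n X).det * (Matrix.vandermonde X).det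
      = ((n.factorial : MvPolynomial (Fin n) ℂ) * ∏ j, dd n X j)
        * (Matrix.vandermonde X).det := by
    rw [hdet]; ring
  exact mul_right_cancel₀ hV h2


/-- the Jacobian determinant identity
`det M = n! ∏_{j≠k} (e_j - e_k)`, where `M` is the Jacobian matrix of the map
`𝐟_j(e) = e_j ∏_{k≠j}(e_j - e_k)`, with off-diagonal entries
`M_{jk} = -e_j ∏_{ℓ≠j,k}(e_j - e_ℓ)` and diagonal entries
`M_{jj} = ∏_{k≠j}(e_j - e_k) + ∑_{k≠j} e_j ∏_{ℓ≠j,k}(e_j - e_ℓ)`. -/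
theorem jacobian_det_eq_factorial_mul_prod (n : ℕ) (hn : 1 ≤ n) (e : Fin n → ℂ) :
    Matrix.det (Matrix.of fun j k : Fin n =>
      if k = j then
        (∏ l ∈ Finset.univ.erase j, (e j - e l)) +
          ∑ m ∈ Finset.univ.erase j, e j * ∏ l ∈ (Finset.univ.erase j).erase m, (e j - e l)
      else
        -(e j * ∏ l ∈ (Finset.univ.erase j).erase k, (e j - e l)))
    = (n.factorial : ℂ) * ∏ j, ∏ k ∈ Finset.univ.erase j, (e j - e k) := by
  show (Mmat n e).det = _
  set X : Fin n → MvPolynomial (Fin n) ℂ := MvPolynomial.X with hX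
  set f : MvPolynomial (Fin n) ℂ →+* ℂ := (MvPolynomial.aeval e).toRingHom with hf
  have hmap : f.mapMatrix (Mmat n X) = Mmat n e := by
    ext j k
    simp only [RingHom.mapMatrix_apply, Matrix.map_apply, Mmat, Matrix.of_apply]
    rw [apply_ite f]
    congr 1
    · rw [map_add, map_prod, map_sum]
      congr 1
      · exact Finset.prod_congr rfl fun l _ => by simp [f, X]
      · refine Finset.sum_congr rfl fun m _ => ?_
        rw [map_mul, map_prod]
        congr 1
        · simp [f, X]
        · exact Finset.prod_congr rfl fun l _ => by simp [f, X]
    · rw [map_neg, map_mul, map_prod]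
      congr 1
      congr 1
      · simp [f, X]
      · exact Finset.prod_congr rfl fun l _ => by simp [f, X]
  have h1 : (Mmat n e).det = f (Mmat n X).det := by
    rw [RingHom.map_det, hmap]
  rw [h1, detM_poly, map_mul, map_natCast, map_prod]
  congr 1
  refine Finset.prod_congr rfl fun j _ => ?_
  rw [dd, map_prod]
  exact Finset.prod_congr rfl fun l _ => by simp [f, X]
end

section
/- The set 𝐟(𝐄) ∩ 𝐘′ is closed in the subspace topology of 𝐘′: if a point y* ∈ 𝐘′ lies in the closure (in ℂⁿ) of the image 𝐟(𝐄), then y* ∈ 𝐟(𝐄), i.e., there exists e* ∈ 𝐄 with 𝐟(e*) = y*. -/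
open Finset

/-- The set `𝐘′` of tuples of nonzero complex numbers whose reciprocals have nonvanishing
sums over every nonempty subset of indices. -/
def Y'set (n : ℕ) : Set (Fin n → ℂ) :=
  {y | (∀ j, y j ≠ 0) ∧ ∀ J : Finset (Fin n), J.Nonempty → ∑ j ∈ J, (y j)⁻¹ ≠ 0}

/-!
For `e ∈ 𝐄` the numbers `1 / 𝐟_j(e)` are the residues of `1 / P`, `P(x) = x ∏ₖ (x - e_k)`, at the
nonzero roots of `P`, i.e. Lagrange nodal weights; together with the residue at `0` they sum
to zero. Let `e_m ∈ 𝐄` with `𝐟(e_m) → y`. If `‖e_m‖` does not tend to infinity, a limit point `e`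
of the sequence satisfies `𝐟(e) = y`, and `e ∈ 𝐄` because `y` has no zero coordinate. Otherwise
rescale: along a subsequence `e_m / ‖e_m‖ → z ≠ 0`. For `J = {j | z_j ≠ 0}`, the sum of the
residues at the large roots `e_{m,j}`, `j ∈ J`, is `-1 / (2πi)` times the integral of `1 / P` over
a circle of radius `≍ ‖e_m‖` staying at distance `≍ ‖e_m‖` from every root, hence is `O(‖e_m‖⁻ⁿ)`.
In the limit `∑_{j ∈ J} 1 / y_j = 0`, contradicting `y ∈ 𝐘′`.
-/

open Metric Filter Topology Polynomial Lagrange Complex Real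

namespace Lagrange

variable {F ι : Type*} [Field F] [DecidableEq ι] {s : Finset ι} {v : ι → F}

theorem inv_eval_nodal_eq_sum_nodalWeight_mul_inv_sub (hvs : Set.InjOn v s) (hs : s.Nonempty)
    {x : F} (hx : ∀ i ∈ s, x ≠ v i) :
    (eval x (nodal s v))⁻¹ = ∑ i ∈ s, nodalWeight s v i * (x - v i)⁻¹ := by
  have h := eval_interpolate_not_at_node 1 hx
  simp only [interpolate_one hvs hs, eval_one, Pi.one_apply, mul_one] at h
  exact inv_eq_of_mul_eq_one_right h.symm

/-- The sum is the coefficient of `X ^ (#s - 1)` in the Lagrange interpolant of the constant `1`. -/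
theorem sum_nodalWeight_eq_zero (hvs : Set.InjOn v s) (hs : 2 ≤ #s) :
    ∑ i ∈ s, nodalWeight s v i = 0 := by
  have h := coeff_eq_sum hvs (P := 1) (by rw [degree_one]; exact_mod_cast (by omega : 0 < #s))
  simp only [coeff_one, eval_one, one_div] at h
  rw [if_neg (by omega)] at h
  simp only [nodalWeight, prod_inv_distrib, h]

end Lagrange

theorem nodal_univ_fin_cons_zero {R : Type*} [CommRing R] {n : ℕ} (e : Fin n → R) :
    nodal univ (Fin.cons 0 e : Fin (n + 1) → R) = X * nodal univ e := by
  simp [nodal, Fin.prod_univ_succ]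

theorem norm_inv_eval_nodal_le {F ι : Type*} [NormedField F] {s : Finset ι} {v : ι → F} {x : F}
    {b : ℝ} (hb : 0 < b) (hx : ∀ i ∈ s, b ≤ ‖x - v i‖) :
    ‖(eval x (nodal s v))⁻¹‖ ≤ (b ^ #s)⁻¹ := by
  rw [eval_nodal, norm_inv, norm_prod]
  refine inv_anti₀ (pow_pos hb _) ?_
  simpa using prod_le_prod (fun _ _ => hb.le) hx

theorem circleIntegral.integral_sub_inv_of_notMem_closedBall {c w : ℂ} {R : ℝ} (hR : 0 ≤ R)
    (hw : w ∉ closedBall c R) : (∮ z in C(c, R), (z - w)⁻¹) = 0 := by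
  have hd : DifferentiableOn ℂ (fun z => (z - w)⁻¹) (closedBall c R) := fun z hz =>
    ((differentiableAt_id.sub_const w).inv
      (sub_ne_zero.2 (ne_of_mem_of_not_mem hz hw))).differentiableWithinAt
  exact circleIntegral_eq_zero_of_differentiable_on_off_countable hR Set.countable_empty
    hd.continuousOn fun z hz => hd.differentiableAt (closedBall_mem_nhds_of_mem hz.1)

section NodalResidues

variable {ι : Type*} [DecidableEq ι] {s : Finset ι} {v : ι → ℂ}

theorem circleIntegral.integral_inv_eval_nodal (hvs : Set.InjOn v s) (hs : s.Nonempty) {c : ℂ}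
    {R : ℝ} (hR : 0 ≤ R) (hv : ∀ i ∈ s, dist (v i) c ≠ R) :
    (∮ z in C(c, R), (eval z (nodal s v))⁻¹) =
      2 * π * I * ∑ i ∈ s with dist (v i) c < R, nodalWeight s v i := by
  have hsphere : ∀ z ∈ sphere c R, ∀ i ∈ s, z ≠ v i := by
    rintro z hz i hi rfl
    exact hv i hi (mem_sphere.1 hz)
  rw [circleIntegral.integral_congr hR fun z hz =>
      inv_eval_nodal_eq_sum_nodalWeight_mul_inv_sub hvs hs (hsphere z hz),
    circleIntegral.integral_fun_sum, mul_sum, sum_filter]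
  · refine sum_congr rfl fun i hi => ?_
    rw [circleIntegral.integral_const_mul]
    split_ifs with h
    · rw [circleIntegral.integral_sub_inv_of_mem_ball h]
      ring
    · rw [circleIntegral.integral_sub_inv_of_notMem_closedBall hR
        fun h' => hv i hi ((mem_closedBall.1 h').antisymm (not_lt.1 h)), mul_zero]
  · intro i hi
    refine (continuousOn_const.mul (ContinuousOn.inv₀ (by fun_prop) ?_)).circleIntegrable hR
    exact fun z hz => sub_ne_zero.2 (hsphere z hz i hi)

/-- Since all the nodal weights sum to zero, those of the nodes outside the circle `|z| = r`
sum to minus those inside, i.e. to `-(2πi)⁻¹ ∮_{|z| = r} dz / nodal s v`. -/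
theorem norm_sum_nodalWeight_filter_lt_norm_le (hvs : Set.InjOn v s) (hs : 2 ≤ #s) {r b : ℝ}
    (hr : 0 ≤ r) (hb : 0 < b) (hsep : ∀ i ∈ s, b ≤ |‖v i‖ - r|) :
    ‖∑ i ∈ s with r < ‖v i‖, nodalWeight s v i‖ ≤ r / b ^ #s := by
  have hne : ∀ i ∈ s, dist (v i) 0 ≠ r := fun i hi h => by
    have := hsep i hi
    rw [dist_zero_right] at h
    rw [h, sub_self, abs_zero] at this
    linarith
  have hint := circleIntegral.integral_inv_eval_nodal hvs (card_pos.1 (by omega)) hr hne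
  simp only [dist_zero_right] at hint
  have houtside : ∑ i ∈ s with r < ‖v i‖, nodalWeight s v i =
      -∑ i ∈ s with ‖v i‖ < r, nodalWeight s v i := by
    have h := sum_filter_add_sum_filter_not s (fun i => ‖v i‖ < r) (nodalWeight s v)
    rw [sum_nodalWeight_eq_zero hvs hs, add_eq_zero_iff_neg_eq] at h
    rw [h]
    refine sum_congr (filter_congr fun i hi => ?_) fun _ _ => rfl
    have hvi : ‖v i‖ ≠ r := dist_zero_right (v i) ▸ hne i hi
    exact ⟨fun h => not_lt.2 h.le, fun h => lt_of_le_of_ne (not_lt.1 h) hvi.symm⟩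
  have hbound : ∀ z ∈ sphere (0 : ℂ) r, ‖(eval z (nodal s v))⁻¹‖ ≤ (b ^ #s)⁻¹ := by
    refine fun z hz => norm_inv_eval_nodal_le hb fun i hi => (hsep i hi).trans ?_
    rw [← mem_sphere_zero_iff_norm.1 hz, abs_sub_comm]
    exact abs_norm_sub_norm_le z (v i)
  have h2πI : ‖(2 * π * I : ℂ)‖ = 2 * π := by simp [pi_pos.le]
  calc ‖∑ i ∈ s with r < ‖v i‖, nodalWeight s v i‖
      = (2 * π)⁻¹ * ‖∮ z in C(0, r), (eval z (nodal s v))⁻¹‖ := by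
        rw [houtside, norm_neg, hint, norm_mul, h2πI, inv_mul_cancel_left₀ (by positivity)]
    _ ≤ (2 * π)⁻¹ * (2 * π * r * (b ^ #s)⁻¹) := by
        gcongr
        exact circleIntegral.norm_integral_le_of_norm_le_const hr hbound
    _ = r / b ^ #s := by field_simp

end NodalResidues

theorem exists_pos_forall_ne_zero_le_norm {ι E : Type*} [Finite ι] [NormedAddCommGroup E]
    (z : ι → E) : ∃ δ > 0, ∀ j, z j ≠ 0 → δ ≤ ‖z j‖ := by
  classical
  rcases isEmpty_or_nonempty ι with hι | hι
  · exact ⟨1, one_pos, fun j => isEmptyElim j⟩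
  obtain ⟨j₀, hj₀⟩ := Finite.exists_min fun j => if z j = 0 then 1 else ‖z j‖
  refine ⟨if z j₀ = 0 then 1 else ‖z j₀‖, by split_ifs with h <;> simp [h], fun j hj => ?_⟩
  simpa [hj] using hj₀ j

theorem continuous_fmap (n : ℕ) : Continuous (fmap n) := by
  unfold fmap
  fun_prop

theorem mem_Eset_of_fmap_ne_zero {n : ℕ} {e : Fin n → ℂ} (h : ∀ j, fmap n e j ≠ 0) :
    e ∈ Eset n := by
  refine ⟨fun j hj => h j (by simp [fmap, hj]), fun a b hab => ?_⟩
  by_contra hne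
  exact h a (mul_eq_zero_of_right _ (prod_eq_zero (mem_erase.2 ⟨Ne.symm hne, mem_univ b⟩)
    (by rw [hab, sub_self])))

theorem fmap_eq_eval_derivative (n : ℕ) (e : Fin n → ℂ) (j : Fin n) :
    fmap n e j = eval (e j) (derivative (X * nodal univ e)) := by
  rw [derivative_mul, eval_add, eval_mul, eval_mul, eval_nodal_at_node (mem_univ j),
    eval_nodal_derivative_eval_node_eq (mem_univ j), eval_nodal]
  simp [fmap]

theorem inv_fmap_eq_nodalWeight (n : ℕ) (e : Fin n → ℂ) (j : Fin n) :
    (fmap n e j)⁻¹ = nodalWeight univ (Fin.cons 0 e : Fin (n + 1) → ℂ) j.succ := by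
  rw [nodalWeight_eq_eval_derivative_nodal (mem_univ _), nodal_univ_fin_cons_zero, Fin.cons_succ,
    fmap_eq_eval_derivative]

theorem norm_sum_inv_fmap_filter_lt_norm_le {n : ℕ} (hn : 1 ≤ n) {e : Fin n → ℂ} (he : e ∈ Eset n)
    {r b : ℝ} (hb : 0 < b) (hbr : b ≤ r) (hsep : ∀ j, b ≤ |‖e j‖ - r|) :
    ‖∑ j with r < ‖e j‖, (fmap n e j)⁻¹‖ ≤ r / b ^ (n + 1) := by
  set v : Fin (n + 1) → ℂ := Fin.cons 0 e
  have hv : Function.Injective v :=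
    Fin.cons_injective_iff.2 ⟨fun ⟨j, hj⟩ => he.1 j hj, he.2⟩
  have hsum : ∑ j with r < ‖e j‖, (fmap n e j)⁻¹ = ∑ i with r < ‖v i‖, nodalWeight univ v i := by
    simp only [sum_filter, Fin.sum_univ_succ, inv_fmap_eq_nodalWeight]
    simp [v, (hb.trans_le hbr).not_gt]
  have hvsep : ∀ i ∈ univ, b ≤ |‖v i‖ - r| := by
    refine fun i _ => Fin.cases ?_ (fun j => hsep j) i
    simpa [v, abs_of_nonneg (hb.le.trans hbr)] using hbr
  rw [hsum]
  simpa using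
    norm_sum_nodalWeight_filter_lt_norm_le hv.injOn (by simpa using hn) (hb.le.trans hbr) hb hvsep

/-- When `‖e - c z‖ < δ c` with `4 δ ≤ ‖z_j‖` on the support of `z`, the circle of radius `2 δ c`
separates the roots `e_j` with `z_j ≠ 0` from the others by at least `δ c`. -/
theorem tendsto_sum_inv_fmap_of_tendsto_smul {α : Type*} {l : Filter α} {n : ℕ} (hn : 1 ≤ n)
    {e : α → Fin n → ℂ} (he : ∀ a, e a ∈ Eset n) {c : α → ℝ} (hc : Tendsto c l atTop)
    {z : Fin n → ℂ} (hdir : Tendsto (fun a => (c a)⁻¹ • e a) l (𝓝 z)) :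
    Tendsto (fun a => ∑ j with z j ≠ 0, (fmap n (e a) j)⁻¹) l (𝓝 0) := by
  obtain ⟨δ, hδ, hzδ⟩ : ∃ δ > 0, ∀ j, z j ≠ 0 → 4 * δ ≤ ‖z j‖ := by
    obtain ⟨δ, hδ, h⟩ := exists_pos_forall_ne_zero_le_norm z
    exact ⟨δ / 4, by positivity, fun j hj => by linarith [h j hj]⟩
  have hclose : ∀ᶠ a in l, 0 < c a ∧ ∀ j, |‖e a j‖ - c a * ‖z j‖| < c a * δ := by
    filter_upwards [hc.eventually_gt_atTop 0,
      (tendsto_iff_norm_sub_tendsto_zero.1 hdir).eventually (gt_mem_nhds hδ)] with a hca ha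
    refine ⟨hca, fun j => ?_⟩
    calc |‖e a j‖ - c a * ‖z j‖| = |c a * ((c a)⁻¹ * ‖e a j‖ - ‖z j‖)| := by
          rw [mul_sub, mul_inv_cancel_left₀ hca.ne']
      _ = c a * |‖((c a)⁻¹ • e a) j‖ - ‖z j‖| := by
          rw [abs_mul, abs_of_pos hca, Pi.smul_apply, norm_smul, norm_inv,
            Real.norm_of_nonneg hca.le]
      _ ≤ c a * ‖(c a)⁻¹ • e a - z‖ := by
          gcongr
          exact (abs_norm_sub_norm_le _ _).trans (norm_le_pi_norm (_ - z) j)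
      _ < c a * δ := by gcongr
  have hbound : ∀ᶠ a in l,
      ‖∑ j with z j ≠ 0, (fmap n (e a) j)⁻¹‖ ≤ 2 * (δ * c a) / (δ * c a) ^ (n + 1) := by
    filter_upwards [hclose] with a ⟨hca, ha⟩
    have hb : 0 < δ * c a := mul_pos hδ hca
    have hroots : ∀ j, z j ≠ 0 ∧ 3 * (δ * c a) < ‖e a j‖ ∨ z j = 0 ∧ ‖e a j‖ < δ * c a := by
      intro j
      have h := abs_lt.1 (ha j)
      by_cases hj : z j = 0
      · rw [hj, norm_zero, mul_zero, sub_zero] at h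
        exact Or.inr ⟨hj, by linarith⟩
      · have := mul_le_mul_of_nonneg_left (hzδ j hj) hca.le
        exact Or.inl ⟨hj, by linarith⟩
    have hJ : ∀ j, z j ≠ 0 ↔ 2 * (δ * c a) < ‖e a j‖ := fun j => by
      rcases hroots j with ⟨hj, h⟩ | ⟨hj, h⟩
      · exact iff_of_true hj (by linarith)
      · exact iff_of_false (not_not.2 hj) (by linarith)
    have hsep : ∀ j, δ * c a ≤ |‖e a j‖ - 2 * (δ * c a)| := fun j => by
      rcases hroots j with ⟨-, h⟩ | ⟨-, h⟩
      · exact le_abs.2 (Or.inl (by linarith))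
      · exact le_abs.2 (Or.inr (by linarith))
    rw [filter_congr fun j _ => hJ j]
    exact norm_sum_inv_fmap_filter_lt_norm_le hn (he a) hb (by linarith) hsep
  refine squeeze_zero_norm' hbound ?_
  have hδc : Tendsto (fun a => δ * c a) l atTop := hc.const_mul_atTop hδ
  have hlim : Tendsto (fun a => 2 / (δ * c a) ^ n) l (𝓝 0) :=
    tendsto_const_nhds.div_atTop ((tendsto_pow_atTop (by omega)).comp hδc)
  refine hlim.congr' ?_
  filter_upwards [hδc.eventually_gt_atTop 0] with a ha
  field_simp
  ring

theorem not_tendsto_norm_atTop_of_tendsto_fmap {n : ℕ} (hn : 1 ≤ n) {e : ℕ → Fin n → ℂ}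
    (he : ∀ m, e m ∈ Eset n) {y : Fin n → ℂ} (hy : y ∈ Y'set n)
    (hlim : Tendsto (fun m => fmap n (e m)) atTop (𝓝 y)) :
    ¬Tendsto (fun m => ‖e m‖) atTop atTop := by
  intro hinf
  have hsphere : ∀ᶠ m in atTop, ‖e m‖⁻¹ • e m ∈ sphere (0 : Fin n → ℂ) 1 := by
    filter_upwards [hinf.eventually_gt_atTop 0] with m hm
    rw [mem_sphere_zero_iff_norm, norm_smul, norm_inv, norm_norm, inv_mul_cancel₀ hm.ne']
  obtain ⟨z, hz, φ, hφ, hdir⟩ := (isCompact_sphere _ _).tendsto_subseq' hsphere.frequently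
  obtain ⟨j, hj⟩ : ∃ j, z j ≠ 0 := Function.ne_iff.1 (ne_zero_of_mem_sphere one_ne_zero ⟨z, hz⟩)
  have hzero := tendsto_sum_inv_fmap_of_tendsto_smul hn (fun m => he (φ m))
    (hinf.comp hφ.tendsto_atTop) hdir
  have hsum : Tendsto (fun m => ∑ j with z j ≠ 0, (fmap n (e (φ m)) j)⁻¹) atTop
      (𝓝 (∑ j with z j ≠ 0, (y j)⁻¹)) :=
    tendsto_finsetSum _ fun j _ =>
      ((continuous_apply j).continuousAt.tendsto.comp (hlim.comp hφ.tendsto_atTop)).inv₀ (hy.1 j)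
  exact hy.2 _ ⟨j, by simpa using hj⟩ (tendsto_nhds_unique hsum hzero)

/-- `𝐟(𝐄) ∩ 𝐘′` is closed in `𝐘′`: any `y* ∈ 𝐘′` in the closure of the
image `𝐟(𝐄)` already lies in `𝐟(𝐄)`. -/
theorem fmap_image_inter_Y'_closed (n : ℕ) (hn : 1 ≤ n) (y : Fin n → ℂ)
    (hy : y ∈ Y'set n) (hcl : y ∈ closure (fmap n '' Eset n)) :
    ∃ e ∈ Eset n, fmap n e = y := by
  obtain ⟨u, hu, hlim⟩ := mem_closure_iff_seq_limit.1 hcl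
  choose e he hfe using hu
  obtain rfl : u = fun m => fmap n (e m) := funext fun m => (hfe m).symm
  obtain ⟨R, hR⟩ : ∃ R, ∃ᶠ m in atTop, ‖e m‖ < R := by
    simpa only [Filter.tendsto_atTop, not_forall, not_eventually, not_le] using
      not_tendsto_norm_atTop_of_tendsto_fmap hn he hy hlim
  obtain ⟨x, -, φ, hφ, hx⟩ := (isCompact_closedBall (0 : Fin n → ℂ) R).tendsto_subseq'
    (hR.mono fun m hm => mem_closedBall_zero_iff.2 hm.le)
  have hfx : fmap n x = y :=
    tendsto_nhds_unique ((continuous_fmap n).continuousAt.tendsto.comp hx)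
      (hlim.comp hφ.tendsto_atTop)
  exact ⟨x, mem_Eset_of_fmap_ne_zero (hfx ▸ hy.1), hfx⟩
end

section
/- Let f : ℂ → ℂ be entire and let w : ℝ → ℂ be a nonconstant differentiable function with w′(t) = f(w(t)) for all t ∈ ℝ, periodic with minimal period p > 0. Then there exists ε > 0 such that every differentiable function v : ℝ → ℂ with v′(t) = f(v(t)) for all t ∈ ℝ and |v(0) − w(0)| < ε is itself periodic with minimal period exactly p: v(t+p) = v(t) for all t ∈ ℝ, and no q ∈ (0,p) is a period of v. (Nearby orbits are synchronously iso-periodic.) -/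
/-!
The constant curve at a zero of `f` is a solution, so by uniqueness `f (w 0) ≠ 0`.

The heart of the proof is that for every `T ∈ [0, p]` the time-`T` map of the flow is holomorphic
on one fixed disc `B` around `w 0`. For short times this holds near every point of the orbit with
a uniform time step: the local flow is the uniform limit of the Picard iterates, which are
holomorphic in the initial value. The time-`T` map is a composition of finitely many such
short-time maps.

If a solution `v` starting in `B` with `f (v 0) ≠ 0` is `T`-periodic, the time-`T` map fixes the
points `v t` for small `t`, which accumulate at `v 0`. By the identity theorem it is the identity
on `B`, so every solution starting in `B` returns at time `T` and is therefore `T`-periodic. With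
`v = w` and `T = p` this makes all nearby solutions `p`-periodic; exchanging the roles, a period
`q < p` of a nearby solution would be a period of `w`.
-/

open Filter Metric Set MeasureTheory
open scoped Topology NNReal

theorem LocallyLipschitz.exists_lipschitzOnWith_image_Icc_union {α β : Type*}
    [PseudoMetricSpace α] [PseudoMetricSpace β] {f : α → β} (hf : LocallyLipschitz f)
    {u v : ℝ → α} {a b : ℝ} (hu : ContinuousOn u (Icc a b)) (hv : ContinuousOn v (Icc a b)) :
    ∃ K, LipschitzOnWith K f (u '' Icc a b ∪ v '' Icc a b) :=
  hf.locallyLipschitzOn.exists_lipschitzOnWith_of_compact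
    ((isCompact_Icc.image_of_continuousOn hu).union (isCompact_Icc.image_of_continuousOn hv))

theorem intervalIntegral.hasDerivAt_integral_of_continuous {𝕜 E : Type*} [RCLike 𝕜]
    [NormedAddCommGroup E] [NormedSpace ℝ E] [NormedSpace 𝕜 E] {F F' : 𝕜 → ℝ → E}
    (hF : Continuous (Function.uncurry F)) (hF' : Continuous (Function.uncurry F'))
    (hd : ∀ x t, HasDerivAt (F · t) (F' x t) x) (a b : ℝ) (x₀ : 𝕜) :
    HasDerivAt (fun x => ∫ t in a..b, F x t) (∫ t in a..b, F' x₀ t) x₀ := by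
  obtain ⟨C, hC⟩ := ((isCompact_closedBall x₀ 1).prod isCompact_uIcc).exists_bound_of_continuousOn
    hF'.continuousOn
  exact (hasDerivAt_integral_of_dominated_loc_of_deriv_le (bound := fun _ => C)
    (closedBall_mem_nhds x₀ one_pos)
    (Eventually.of_forall fun x => (hF.comp (Continuous.prodMk_right x)).aestronglyMeasurable)
    ((hF.comp (Continuous.prodMk_right x₀)).intervalIntegrable a b)
    (hF'.comp (Continuous.prodMk_right x₀)).aestronglyMeasurable
    (ae_of_all _ fun t ht x hx => hC (x, t) ⟨hx, uIoc_subset_uIcc ht⟩) intervalIntegrable_const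
    (ae_of_all _ fun t _ x _ => hd x t)).2

theorem exists_tendstoUniformlyOn_of_norm_sub_le_summable {α E : Type*}
    [NormedAddCommGroup E] [CompleteSpace E] {F : ℕ → α → E} {s : Set α} {u : ℕ → ℝ}
    (hu : Summable u) (h : ∀ n, ∀ x ∈ s, ‖F (n + 1) x - F n x‖ ≤ u n) :
    ∃ G, TendstoUniformlyOn F G atTop s := by
  refine ⟨fun x => F 0 x + ∑' n, (F (n + 1) x - F n x), ?_⟩
  have hsum := tendstoUniformlyOn_tsum_nat hu h
  rw [Metric.tendstoUniformlyOn_iff] at hsum ⊢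
  intro ε hε
  filter_upwards [hsum ε hε] with N hN x hx
  have hN := hN x hx
  rw [Finset.sum_range_sub (fun n => F n x) N, dist_eq_norm] at hN
  rw [dist_eq_norm]
  convert hN using 2
  abel

section Uniqueness

variable {E : Type*} [NormedAddCommGroup E] [NormedSpace ℝ E] {f : E → E} {u v : ℝ → E}

theorem LocallyLipschitz.eqOn_Icc_of_isIntegralCurveOn (hf : LocallyLipschitz f) {a b : ℝ}
    (hu : IsIntegralCurveOn u (fun _ => f) (Icc a b))
    (hv : IsIntegralCurveOn v (fun _ => f) (Icc a b)) (ha : u a = v a) :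
    EqOn u v (Icc a b) := by
  obtain ⟨K, hK⟩ := hf.exists_lipschitzOnWith_image_Icc_union hu.continuousOn hv.continuousOn
  have hIci : ∀ {γ : ℝ → E}, IsIntegralCurveOn γ (fun _ => f) (Icc a b) →
      ∀ t ∈ Ico a b, HasDerivWithinAt γ (f (γ t)) (Ici t) t := fun hγ t ht =>
    (hγ t (Ico_subset_Icc_self ht)).mono_of_mem_nhdsWithin (Icc_mem_nhdsGE_of_mem ht)
  exact ODE_solution_unique_of_mem_Icc_right (fun _ _ => hK) hu.continuousOn (hIci hu)
    (fun t ht => .inl (mem_image_of_mem u (Ico_subset_Icc_self ht))) hv.continuousOn (hIci hv)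
    (fun t ht => .inr (mem_image_of_mem v (Ico_subset_Icc_self ht))) ha

theorem LocallyLipschitz.eq_of_isIntegralCurve (hf : LocallyLipschitz f)
    (hu : IsIntegralCurve u (fun _ => f)) (hv : IsIntegralCurve v (fun _ => f)) {t₀ : ℝ}
    (h : u t₀ = v t₀) : u = v := by
  funext t
  have ht₀ : t₀ ∈ Ioo (min t t₀ - 1) (max t t₀ + 1) := by
    constructor <;> linarith [min_le_right t t₀, le_max_right t t₀]
  have ht : t ∈ Icc (min t t₀ - 1) (max t t₀ + 1) := by
    constructor <;> linarith [min_le_left t t₀, le_max_left t t₀]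
  obtain ⟨K, hK⟩ := hf.exists_lipschitzOnWith_image_Icc_union (a := min t t₀ - 1)
    (b := max t t₀ + 1) hu.continuous.continuousOn hv.continuous.continuousOn
  exact ODE_solution_unique_of_mem_Icc (fun _ _ => hK) ht₀ hu.continuous.continuousOn
    (fun s _ => hu s) (fun s hs => .inl (mem_image_of_mem u (Ioo_subset_Icc_self hs)))
    hv.continuous.continuousOn (fun s _ => hv s)
    (fun s hs => .inr (mem_image_of_mem v (Ioo_subset_Icc_self hs))) h ht

theorem LocallyLipschitz.periodic_of_isIntegralCurve (hf : LocallyLipschitz f)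
    (hu : IsIntegralCurve u (fun _ => f)) {T : ℝ} (h : u T = u 0) : Function.Periodic u T :=
  congrFun (hf.eq_of_isIntegralCurve (hu.comp_add T) hu (t₀ := 0) (by simpa using h))

theorem LocallyLipschitz.eq_const_of_isIntegralCurve (hf : LocallyLipschitz f)
    (hu : IsIntegralCurve u (fun _ => f)) {t₀ : ℝ} (h : f (u t₀) = 0) : u = fun _ => u t₀ :=
  hf.eq_of_isIntegralCurve hu (fun _ => by simpa [h] using hasDerivAt_const _ (u t₀)) rfl

end Uniqueness

section Picard

variable {E : Type*} [NormedAddCommGroup E] [NormedSpace ℝ E] {f : E → E}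

noncomputable def picardIter (f : E → E) (x : E) : ℕ → ℝ → E
  | 0 => fun _ => x
  | n + 1 => ODE.picard (fun _ => f) 0 x (picardIter f x n)

theorem picardIter_succ_apply (x : E) (n : ℕ) (t : ℝ) :
    picardIter f x (n + 1) t = x + ∫ s in (0 : ℝ)..t, f (picardIter f x n s) := rfl

theorem continuous_picardIter (hf : Continuous f) (n : ℕ) :
    Continuous fun p : E × ℝ => picardIter f p.1 n p.2 := by
  induction n with
  | zero => exact continuous_fst
  | succ n ih =>
    exact continuous_fst.add (intervalIntegral.continuous_parametric_primitive_of_continuous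
      (f := fun x s => f (picardIter f x n s)) (hf.comp ih))

theorem continuous_picardIter_apply (hf : Continuous f) (x : E) (n : ℕ) :
    Continuous (picardIter f x n) :=
  (continuous_picardIter hf n).comp (Continuous.prodMk_right x)

variable {c x : E} {M τ t : ℝ} {L : ℝ≥0}

theorem norm_picardIter_sub_le (hM : ∀ y ∈ closedBall c 1, ‖f y‖ ≤ M) (hτM : τ * M ≤ 1 / 2)
    (hx : x ∈ closedBall c (1 / 2)) (n : ℕ) (ht : t ∈ Icc 0 τ) :
    ‖picardIter f x n t - x‖ ≤ M * t := by
  have hM0 : 0 ≤ M := (norm_nonneg _).trans (hM c (mem_closedBall_self zero_le_one))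
  induction n generalizing t with
  | zero => simpa [picardIter] using mul_nonneg hM0 ht.1
  | succ n ih =>
    rw [picardIter_succ_apply, add_sub_cancel_left]
    refine (intervalIntegral.norm_integral_le_of_norm_le_const fun s hs => hM _ ?_).trans_eq
      (by rw [sub_zero, abs_of_nonneg ht.1])
    rw [uIoc_of_le ht.1] at hs
    have hMs : M * s ≤ 1 / 2 := by nlinarith [hs.2.trans ht.2]
    exact closedBall_subset_closedBall' (by linarith [mem_closedBall.1 hx])
      (mem_closedBall_iff_norm.2 ((ih ⟨hs.1.le, hs.2.trans ht.2⟩).trans hMs))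

theorem picardIter_mem_closedBall (hM : ∀ y ∈ closedBall c 1, ‖f y‖ ≤ M)
    (hτM : τ * M ≤ 1 / 2) (hx : x ∈ closedBall c (1 / 2)) (n : ℕ) (ht : t ∈ Icc 0 τ) :
    picardIter f x n t ∈ closedBall c 1 := by
  have hM0 : 0 ≤ M := (norm_nonneg _).trans (hM c (mem_closedBall_self zero_le_one))
  have hMt : M * t ≤ 1 / 2 := by nlinarith [ht.2]
  exact closedBall_subset_closedBall' (by linarith [mem_closedBall.1 hx])
    (mem_closedBall_iff_norm.2 ((norm_picardIter_sub_le hM hτM hx n ht).trans hMt))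

theorem norm_picardIter_succ_sub_le (hf : Continuous f) (hM : ∀ y ∈ closedBall c 1, ‖f y‖ ≤ M)
    (hL : LipschitzOnWith L f (closedBall c 1)) (hτM : τ * M ≤ 1 / 2) (hτL : τ * L ≤ 1 / 2)
    (hx : x ∈ closedBall c (1 / 2)) (n : ℕ) (ht : t ∈ Icc 0 τ) :
    ‖picardIter f x (n + 1) t - picardIter f x n t‖ ≤ (1 / 2) ^ (n + 1) := by
  induction n generalizing t with
  | zero =>
    have hM0 : 0 ≤ M := (norm_nonneg _).trans (hM c (mem_closedBall_self zero_le_one))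
    refine (norm_picardIter_sub_le hM hτM hx 1 ht).trans ?_
    nlinarith [ht.2]
  | succ n ih =>
    have hint : ∀ m, IntervalIntegrable (fun s => f (picardIter f x m s)) volume 0 t :=
      fun m => (hf.comp (continuous_picardIter_apply hf x m)).intervalIntegrable 0 t
    rw [picardIter_succ_apply, picardIter_succ_apply, add_sub_add_left_eq_sub,
      ← intervalIntegral.integral_sub (hint _) (hint _)]
    refine (intervalIntegral.norm_integral_le_of_norm_le_const
      (C := L * (1 / 2) ^ (n + 1)) fun s hs => ?_).trans ?_
    · rw [uIoc_of_le ht.1] at hs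
      have hs' : s ∈ Icc 0 τ := ⟨hs.1.le, hs.2.trans ht.2⟩
      exact (hL.norm_sub_le (picardIter_mem_closedBall hM hτM hx _ hs')
        (picardIter_mem_closedBall hM hτM hx _ hs')).trans (by gcongr; exact ih hs')
    · rw [sub_zero, abs_of_nonneg ht.1, pow_succ _ (n + 1)]
      have hLt : (L : ℝ) * t ≤ 1 / 2 := by nlinarith [ht.2, L.coe_nonneg]
      nlinarith [pow_pos (one_half_pos (α := ℝ)) (n + 1)]

variable [CompleteSpace E]

theorem exists_tendstoUniformlyOn_picardIter (hf : Continuous f)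
    (hM : ∀ y ∈ closedBall c 1, ‖f y‖ ≤ M) (hL : LipschitzOnWith L f (closedBall c 1))
    (hτM : τ * M ≤ 1 / 2) (hτL : τ * L ≤ 1 / 2) :
    ∃ Φ : E → ℝ → E, TendstoUniformlyOn (fun n p => picardIter f p.1 n p.2)
      (Function.uncurry Φ) atTop (closedBall c (1 / 2) ×ˢ Icc 0 τ) := by
  obtain ⟨G, hG⟩ := exists_tendstoUniformlyOn_of_norm_sub_le_summable
    (F := fun n (p : E × ℝ) => picardIter f p.1 n p.2) (s := closedBall c (1 / 2) ×ˢ Icc 0 τ)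
    (summable_geometric_two.comp_injective (add_left_injective 1))
    fun n p hp => (norm_picardIter_succ_sub_le hf hM hL hτM hτL hp.1 n hp.2).trans_eq
      (by simp [one_div, inv_pow])
  exact ⟨Function.curry G, by rwa [Function.uncurry_curry]⟩

theorem isIntegralCurveOn_of_tendstoUniformlyOn_picardIter (hf : Continuous f)
    (hM : ∀ y ∈ closedBall c 1, ‖f y‖ ≤ M) (hτM : τ * M ≤ 1 / 2) (hτ : 0 ≤ τ)
    (hx : x ∈ closedBall c (1 / 2)) {φ : ℝ → E}
    (hφ : TendstoUniformlyOn (picardIter f x) φ atTop (Icc 0 τ)) :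
    φ 0 = x ∧ IsIntegralCurveOn φ (fun _ => f) (Icc 0 τ) := by
  have hcont : ContinuousOn φ (Icc 0 τ) :=
    hφ.continuousOn (Frequently.of_forall fun n =>
      (continuous_picardIter_apply hf x n).continuousOn)
  have hint : ∀ t ∈ Icc 0 τ, φ t = ODE.picard (fun _ => f) 0 x φ t := by
    intro t ht
    refine tendsto_nhds_unique ((hφ.tendsto_at ht).comp (tendsto_add_atTop_nat 1))
      (tendsto_const_nhds.add ?_)
    refine intervalIntegral.tendsto_integral_filter_of_dominated_convergence (fun _ => M)
      (Eventually.of_forall fun n =>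
        (hf.comp (continuous_picardIter_apply hf x n)).aestronglyMeasurable)
      (Eventually.of_forall fun n => ae_of_all _ fun s hs => hM _ ?_) intervalIntegrable_const
      (ae_of_all _ fun s hs => ?_)
    all_goals
      rw [uIoc_of_le ht.1] at hs
      have hs' : s ∈ Icc 0 τ := ⟨hs.1.le, hs.2.trans ht.2⟩
    · exact picardIter_mem_closedBall hM hτM hx n hs'
    · exact (hf.tendsto _).comp (hφ.tendsto_at hs')
  refine ⟨by simpa using hint 0 ⟨le_rfl, hτ⟩, fun t ht => ?_⟩
  exact (ODE.hasDerivWithinAt_picard_Icc (f := fun _ => f) (u := univ) ⟨le_rfl, hτ⟩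
    (hf.comp continuous_snd).continuousOn hcont (fun _ _ => mem_univ _) x ht).congr_of_mem
      hint ht

end Picard

section Holomorphic

variable {f : ℂ → ℂ}

theorem differentiable_picardIter (hf : Differentiable ℂ f) (n : ℕ) (t : ℝ) :
    Differentiable ℂ (picardIter f · n t) := by
  suffices ∃ D : ℂ → ℝ → ℂ, Continuous (fun p : ℂ × ℝ => D p.1 p.2) ∧
      ∀ z t, HasDerivAt (picardIter f · n t) (D z t) z by
    obtain ⟨D, -, hD⟩ := this
    exact fun z => (hD z t).differentiableAt
  induction n with
  | zero => exact ⟨fun _ _ => 1, continuous_const, fun z _ => hasDerivAt_id z⟩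
  | succ n ih =>
    obtain ⟨D, hDc, hD⟩ := ih
    have hPc := continuous_picardIter hf.continuous n
    have hF'c : Continuous fun p : ℂ × ℝ => deriv f (picardIter f p.1 n p.2) * D p.1 p.2 :=
      (hf.deriv.continuous.comp hPc).mul hDc
    exact ⟨fun z t => 1 + ∫ s in (0 : ℝ)..t, deriv f (picardIter f z n s) * D z s,
      continuous_const.add (intervalIntegral.continuous_parametric_primitive_of_continuous
        (f := fun z s => deriv f (picardIter f z n s) * D z s) hF'c),
      fun z t => (hasDerivAt_id z).add (intervalIntegral.hasDerivAt_integral_of_continuous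
        (F := fun z s => f (picardIter f z n s))
        (F' := fun z s => deriv f (picardIter f z n s) * D z s) (hf.continuous.comp hPc) hF'c
        (fun z s => (hf _).hasDerivAt.comp z (hD z s)) 0 t z)⟩

/-- `Q` is only constrained at initial values of solutions that exist for all time. -/
def HasHolomorphicFlowOn (f : ℂ → ℂ) (t : ℝ) (U : Set ℂ) : Prop :=
  ∃ Q : ℂ → ℂ, DifferentiableOn ℂ Q U ∧
    ∀ u : ℝ → ℂ, IsIntegralCurve u (fun _ => f) → u 0 ∈ U → u t = Q (u 0)

theorem HasHolomorphicFlowOn.mono {t : ℝ} {U V : Set ℂ} (h : HasHolomorphicFlowOn f t U)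
    (hVU : V ⊆ U) : HasHolomorphicFlowOn f t V :=
  let ⟨Q, hQ, hQu⟩ := h
  ⟨Q, hQ.mono hVU, fun u hu hu0 => hQu u hu (hVU hu0)⟩

theorem hasHolomorphicFlowOn_zero (U : Set ℂ) : HasHolomorphicFlowOn f 0 U :=
  ⟨id, differentiableOn_id, fun _ _ _ => rfl⟩

theorem hasHolomorphicFlowOn_ball (hf : Differentiable ℂ f) {c : ℂ} {M τ : ℝ} {L : ℝ≥0}
    (hM : ∀ y ∈ closedBall c 1, ‖f y‖ ≤ M) (hL : LipschitzOnWith L f (closedBall c 1))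
    (hτM : τ * M ≤ 1 / 2) (hτL : τ * L ≤ 1 / 2) {s : ℝ} (hs : s ∈ Icc 0 τ) :
    HasHolomorphicFlowOn f s (ball c (1 / 2)) := by
  obtain ⟨Φ, hΦ⟩ := exists_tendstoUniformlyOn_picardIter hf.continuous hM hL hτM hτL
  refine ⟨(Φ · s), ?_, fun u hu hu0 => ?_⟩
  · have hz : TendstoUniformlyOn (fun n z => picardIter f z n s) (Φ · s) atTop
        (closedBall c (1 / 2)) :=
      hΦ.comp (fun z => (z, s)) |>.mono fun z hz => ⟨hz, hs⟩
    exact (hz.tendstoLocallyUniformlyOn.mono ball_subset_closedBall).differentiableOn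
      (Eventually.of_forall fun n => (differentiable_picardIter hf n s).differentiableOn)
      isOpen_ball
  · have hx := ball_subset_closedBall hu0
    have ht : TendstoUniformlyOn (picardIter f (u 0)) (Φ (u 0)) atTop (Icc 0 τ) :=
      hΦ.comp (fun t => (u 0, t)) |>.mono fun t ht => ⟨hx, ht⟩
    obtain ⟨hΦ0, hΦsol⟩ := isIntegralCurveOn_of_tendstoUniformlyOn_picardIter hf.continuous hM
      hτM (hs.1.trans hs.2) hx ht
    exact hf.contDiff.locallyLipschitz.eqOn_Icc_of_isIntegralCurveOn (hu.isIntegralCurveOn _)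
      hΦsol hΦ0.symm hs

theorem exists_pos_forall_hasHolomorphicFlowOn_ball (hf : Differentiable ℂ f) {K : Set ℂ}
    (hK : IsCompact K) :
    ∃ τ > 0, ∀ c ∈ K, ∀ s ∈ Icc 0 τ, HasHolomorphicFlowOn f s (ball c (1 / 2)) := by
  have hK1 := hK.cthickening (r := 1)
  obtain ⟨M, hM⟩ := hK1.exists_bound_of_continuousOn hf.continuous.continuousOn
  obtain ⟨L, hL⟩ :=
    hf.contDiff.locallyLipschitz.locallyLipschitzOn.exists_lipschitzOnWith_of_compact hK1
  have hτ : 0 < 1 / (2 * (|M| + L + 1)) := by positivity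
  have hτC : 1 / (2 * (|M| + L + 1)) * (|M| + L + 1) = 1 / 2 := by field_simp
  refine ⟨_, hτ, fun c hc s hs => ?_⟩
  have hsub : closedBall c 1 ⊆ cthickening 1 K := closedBall_subset_cthickening hc 1
  exact hasHolomorphicFlowOn_ball hf (fun y hy => hM y (hsub hy)) (hL.mono hsub)
    (by nlinarith [le_abs_self M, L.coe_nonneg]) (by nlinarith [abs_nonneg M]) hs

theorem HasHolomorphicFlowOn.exists_ball_add {t : ℝ} {U V : Set ℂ} {w : ℝ → ℂ}
    (h : HasHolomorphicFlowOn f t U) (hU : IsOpen U) (hw : IsIntegralCurve w (fun _ => f))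
    (hw0 : w 0 ∈ U) (hV : V ∈ 𝓝 (w t)) :
    ∃ ε > 0, ∀ s, HasHolomorphicFlowOn f s V → HasHolomorphicFlowOn f (t + s) (ball (w 0) ε) := by
  obtain ⟨Q, hQ, hQu⟩ := h
  have hQw : Q (w 0) = w t := (hQu w hw hw0).symm
  obtain ⟨ε, hε, hεU⟩ := Metric.mem_nhds_iff.1 (inter_mem (hU.mem_nhds hw0)
    ((hQ.continuousOn.continuousAt (hU.mem_nhds hw0)).preimage_mem_nhds (hQw ▸ hV)))
  refine ⟨ε, hε, fun s ⟨Φ, hΦ, hΦu⟩ => ⟨Φ ∘ Q, hΦ.comp (hQ.mono fun z hz => (hεU hz).1)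
    fun z hz => (hεU hz).2, fun u hu hu0 => ?_⟩⟩
  have hut : u t = Q (u 0) := hQu u hu (hεU hu0).1
  have := hΦu (u ∘ (· + t)) (hu.comp_add t) (by simpa [hut] using (hεU hu0).2)
  simpa [add_comm, hut] using this

theorem exists_ball_hasHolomorphicFlowOn_Icc {w : ℝ → ℂ} {p τ : ℝ}
    (hw : IsIntegralCurve w (fun _ => f)) (hτ : 0 < τ)
    (hloc : ∀ t ∈ Icc 0 p, ∃ V ∈ 𝓝 (w t), ∀ s ∈ Icc 0 τ, HasHolomorphicFlowOn f s V) :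
    ∃ ε > 0, ∀ T ∈ Icc 0 p, HasHolomorphicFlowOn f T (ball (w 0) ε) := by
  suffices ∀ n : ℕ, ∃ ε > 0, ∀ T ∈ Icc 0 p, T ≤ n * τ →
      HasHolomorphicFlowOn f T (ball (w 0) ε) by
    obtain ⟨n, hn⟩ := exists_nat_ge (p / τ)
    obtain ⟨ε, hε, h⟩ := this n
    exact ⟨ε, hε, fun T hT => h T hT (hT.2.trans (by rwa [div_le_iff₀ hτ] at hn))⟩
  intro n
  induction n with
  | zero =>
    refine ⟨1, one_pos, fun T hT hT0 => ?_⟩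
    rw [le_antisymm (by simpa using hT0) hT.1]
    exact hasHolomorphicFlowOn_zero _
  | succ n ih =>
    obtain ⟨ε, hε, h⟩ := ih
    by_cases hnp : n * τ ≤ p
    · have ht : (n : ℝ) * τ ∈ Icc 0 p := ⟨by positivity, hnp⟩
      obtain ⟨V, hV, hVs⟩ := hloc _ ht
      obtain ⟨ε', hε', h'⟩ :=
        (h _ ht le_rfl).exists_ball_add isOpen_ball hw (mem_ball_self hε) hV
      refine ⟨min ε ε', lt_min hε hε', fun T hT hTn => ?_⟩
      rcases le_total T (n * τ) with hTle | hTle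
      · exact (h T hT hTle).mono (ball_subset_ball (min_le_left _ _))
      · have := h' (T - n * τ) (hVs _ ⟨sub_nonneg.2 hTle, by push_cast at hTn; linarith⟩)
        rw [add_sub_cancel] at this
        exact this.mono (ball_subset_ball (min_le_right _ _))
    · exact ⟨ε, hε, fun T hT _ => h T hT (hT.2.trans (le_of_not_ge hnp))⟩

theorem HasHolomorphicFlowOn.apply_eq_apply_zero_of_periodic {T : ℝ} {U : Set ℂ}
    {u v : ℝ → ℂ} (h : HasHolomorphicFlowOn f T U) (hU : IsOpen U) (hUc : IsPreconnected U)
    (hv : IsIntegralCurve v (fun _ => f)) (hv0 : v 0 ∈ U) (hfv : f (v 0) ≠ 0)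
    (hvT : Function.Periodic v T) (hu : IsIntegralCurve u (fun _ => f)) (hu0 : u 0 ∈ U) :
    u T = u 0 := by
  obtain ⟨Q, hQ, hQu⟩ := h
  have hfix : ∀ᶠ t in 𝓝 0, Q (v t) = v t := by
    filter_upwards [hv.continuous.continuousAt.preimage_mem_nhds (hU.mem_nhds hv0)] with t ht
    have := hQu (v ∘ (· + t)) (hv.comp_add t) (by simpa using ht)
    simp only [Function.comp_apply, zero_add, add_comm T t, hvT t] at this
    exact this.symm
  have hQid : EqOn Q id U :=
    (hQ.analyticOnNhd hU).eqOn_of_preconnected_of_frequently_eq analyticOnNhd_id hUc hv0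
      (((hv 0).tendsto_nhdsNE hfv).frequently (hfix.filter_mono nhdsWithin_le_nhds).frequently)
  rw [hQu u hu hu0, hQid hu0, id]

end Holomorphic

/-- near a nonconstant real-time periodic orbit of minimal period `p > 0`
of a scalar complex entire ODE `ẇ = f(w)`, all globally defined solutions starting
sufficiently close are themselves periodic with the same minimal period `p`
(synchronous iso-periodicity). -/
theorem nearby_orbits_isoperiodic
    (f : ℂ → ℂ) (hf : Differentiable ℂ f) (w : ℝ → ℂ)
    (hw : ∀ t : ℝ, HasDerivAt w (f (w t)) t)
    (hnc : ∃ t₁ t₂ : ℝ, w t₁ ≠ w t₂)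
    (p : ℝ) (hp : 0 < p)
    (hper : ∀ t : ℝ, w (t + p) = w t)
    (hmin : ∀ q : ℝ, 0 < q → q < p → ∃ t : ℝ, w (t + q) ≠ w t) :
    ∃ ε > 0, ∀ v : ℝ → ℂ, (∀ t : ℝ, HasDerivAt v (f (v t)) t) →
      ‖v 0 - w 0‖ < ε →
      (∀ t : ℝ, v (t + p) = v t) ∧
      (∀ q : ℝ, 0 < q → q < p → ∃ t : ℝ, v (t + q) ≠ v t) := by
  have hfL := hf.contDiff.locallyLipschitz
  have hfw : f (w 0) ≠ 0 := fun h0 => by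
    obtain ⟨t₁, t₂, hne⟩ := hnc
    exact hne (by rw [hfL.eq_const_of_isIntegralCurve hw h0])
  obtain ⟨τ, hτ, hloc⟩ := exists_pos_forall_hasHolomorphicFlowOn_ball hf
    ((isCompact_Icc (a := 0) (b := p)).image (IsIntegralCurve.continuous hw))
  obtain ⟨ε₁, hε₁, hflow⟩ := exists_ball_hasHolomorphicFlowOn_Icc hw hτ fun t ht =>
    ⟨_, ball_mem_nhds _ one_half_pos, hloc _ (mem_image_of_mem w ht)⟩
  obtain ⟨ε₂, hε₂, hfne⟩ := Metric.mem_nhds_iff.1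
    (hf.continuous.continuousAt.preimage_mem_nhds (isOpen_ne.mem_nhds hfw))
  refine ⟨min ε₁ ε₂, lt_min hε₁ hε₂, fun v hv hv0 => ?_⟩
  have hv0₁ : v 0 ∈ ball (w 0) ε₁ := mem_ball_iff_norm.2 (hv0.trans_le (min_le_left _ _))
  have hfv : f (v 0) ≠ 0 := hfne (mem_ball_iff_norm.2 (hv0.trans_le (min_le_right _ _)))
  refine ⟨hfL.periodic_of_isIntegralCurve hv
    ((hflow p ⟨hp.le, le_rfl⟩).apply_eq_apply_zero_of_periodic isOpen_ball
      (convex_ball _ _).isPreconnected hw (mem_ball_self hε₁) hfw hper hv hv0₁),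
    fun q hq hqp => ?_⟩
  by_contra! hvq
  obtain ⟨t, ht⟩ := hmin q hq hqp
  exact ht (hfL.periodic_of_isIntegralCurve hw
    ((hflow q ⟨hq.le, hqp.le⟩).apply_eq_apply_zero_of_periodic isOpen_ball
      (convex_ball _ _).isPreconnected hv hv0₁ hfv hvq hw (mem_ball_self hε₁)) t)
end

section
/- Let a, b ∈ ℝ be such that 1, a, b are linearly independent over ℚ. Then the additive subgroup of ℂ generated by the three elements 1, i, and a + ib is dense in ℂ; that is, the set {m + ni + k(a + ib) : m, n, k ∈ ℤ} has closure equal to all of ℂ. -/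
/-!
The fractional parts of `k (a + b i)`, `k ∈ ℕ`, are bounded and pairwise distinct (as `a` is
irrational), so differences of nearby ones are arbitrarily short nonzero vectors of the group.
In the closure `H` of the group, a limit direction `u` of such vectors spans a line `ℝ u ⊆ H`.
Projecting along this line by `z ↦ Im (z / u)`, the group maps onto `ℤ p + ℤ q + ℤ (a p + b q)`
with `(p, q) ≠ 0`; this subgroup of `ℝ` is dense, since being cyclic would force an integer
relation between `1, a, b`. A subgroup containing the kernel of an open homomorphism and with
dense image is dense.
-/

open Filter Topology Bornology Set Function Complex

def gaussianLatticeAdjoin (v : ℂ) : AddSubgroup ℂ where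
  carrier := {z | ∃ m n k : ℤ, z = (m : ℂ) + (n : ℂ) * I + (k : ℂ) * v}
  add_mem' := by
    rintro _ _ ⟨m, n, k, rfl⟩ ⟨m', n', k', rfl⟩
    exact ⟨m + m', n + n', k + k', by push_cast; ring⟩
  zero_mem' := ⟨0, 0, 0, by simp⟩
  neg_mem' := by
    rintro _ ⟨m, n, k, rfl⟩
    exact ⟨-m, -n, -k, by push_cast; ring⟩

theorem fract_add_fract_mul_I_mem_gaussianLatticeAdjoin (a b : ℝ) (k : ℤ) :
    ((Int.fract (k * a) : ℝ) : ℂ) + (Int.fract (k * b) : ℝ) * I ∈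
      gaussianLatticeAdjoin (a + b * I) :=
  ⟨-⌊k * a⌋, -⌊k * b⌋, k, by simp only [Int.fract]; push_cast; ring⟩

theorem norm_fract_add_fract_mul_I_le (x y : ℝ) :
    ‖((Int.fract x : ℝ) : ℂ) + (Int.fract y : ℝ) * I‖ ≤ 2 := by
  refine (norm_le_abs_re_add_abs_im _).trans ?_
  simp only [add_re, ofReal_re, mul_re, I_re, mul_zero, ofReal_im, I_im, mul_one, sub_self,
    add_zero, add_im, mul_im, zero_add, abs_of_nonneg (Int.fract_nonneg (R := ℝ) _)]
  linarith [Int.fract_lt_one x, Int.fract_lt_one y]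

theorem Irrational.injective_fract_natCast_mul {a : ℝ} (ha : Irrational a) :
    Injective fun k : ℕ => Int.fract (k * a) := by
  intro k k' h
  obtain ⟨z, hz⟩ := Int.fract_eq_fract.1 h
  by_contra hne
  refine (ha.intCast_mul (m := (k : ℤ) - k') (sub_ne_zero.2 (by exact_mod_cast hne))).ne_int z ?_
  push_cast
  linarith

section ClosedSubgroup

variable {E : Type*} [NormedAddCommGroup E]

theorem AddSubgroup.exists_tendsto_zero_of_injective [ProperSpace E] (G : AddSubgroup E)
    {s : ℕ → E} (hs : Injective s) (hsG : ∀ n, s n ∈ G) (hb : IsBounded (range s)) :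
    ∃ w : ℕ → E, (∀ n, w n ∈ G ∧ w n ≠ 0) ∧ Tendsto w atTop (𝓝 0) := by
  obtain ⟨x, -, φ, hφ, hx⟩ := tendsto_subseq_of_bounded hb (fun n => mem_range_self n)
  refine ⟨fun n => s (φ (n + 1)) - s (φ n), fun n => ⟨G.sub_mem (hsG _) (hsG _), ?_⟩, ?_⟩
  · exact sub_ne_zero.2 (hs.ne (hφ n.lt_succ_self).ne')
  · simpa using ((hx.comp (tendsto_add_atTop_nat 1)).sub hx)

variable [NormedSpace ℝ E]

theorem AddSubgroup.smul_mem_of_tendsto_normalize (H : AddSubgroup E)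
    (hH : IsClosed (H : Set E)) {w : ℕ → E} {u : E} (hwH : ∀ n, w n ∈ H)
    (hw : Tendsto w atTop (𝓝 0)) (hu : Tendsto (fun n => ‖w n‖⁻¹ • w n) atTop (𝓝 u))
    (t : ℝ) : t • u ∈ H := by
  -- rounding the coefficient `t / ‖w n‖` down to an integer moves the point by at most `‖w n‖`
  have hround : Tendsto (fun n => ⌊t / ‖w n‖⌋ • w n - t • (‖w n‖⁻¹ • w n)) atTop (𝓝 0) := by
    refine squeeze_zero_norm (fun n => ?_) (tendsto_norm_zero.comp hw)
    rw [← Int.cast_smul_eq_zsmul ℝ, smul_smul, ← sub_smul, norm_smul, Real.norm_eq_abs,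
      ← div_eq_mul_inv, abs_sub_comm, Int.self_sub_floor, abs_of_nonneg (Int.fract_nonneg _)]
    exact mul_le_of_le_one_left (norm_nonneg _) (Int.fract_lt_one _).le
  refine hH.mem_of_tendsto (b := atTop) (f := fun n => ⌊t / ‖w n‖⌋ • w n) ?_
    (Eventually.of_forall fun n => H.zsmul_mem (hwH n) _)
  simpa using hround.add (hu.const_smul t)

theorem AddSubgroup.exists_ne_zero_forall_smul_mem [ProperSpace E] (H : AddSubgroup E)
    (hH : IsClosed (H : Set E)) {w : ℕ → E} (hwH : ∀ n, w n ∈ H ∧ w n ≠ 0)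
    (hw : Tendsto w atTop (𝓝 0)) : ∃ u ≠ 0, ∀ t : ℝ, t • u ∈ H := by
  obtain ⟨u, hu, φ, hφ, hlim⟩ := (isCompact_sphere (0 : E) 1).tendsto_subseq
    (x := fun n => ‖w n‖⁻¹ • w n) (fun n => by simp [norm_smul, (hwH n).2])
  refine ⟨u, ne_zero_of_mem_unit_sphere ⟨u, hu⟩, fun t => ?_⟩
  exact H.smul_mem_of_tendsto_normalize hH (fun n => (hwH (φ n)).1) (hw.comp hφ.tendsto_atTop)
    hlim t

end ClosedSubgroup

theorem AddSubgroup.dense_of_ker_le_of_dense_map {E F : Type*} [AddGroup E]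
    [TopologicalSpace E] [AddGroup F] [TopologicalSpace F] {H : AddSubgroup E} {f : E →+ F}
    (hf : IsOpenMap f) (hker : f.ker ≤ H) (hd : Dense (H.map f : Set F)) :
    Dense (H : Set E) := by
  rw [← sup_eq_left.2 hker, ← AddSubgroup.comap_map_eq]
  exact hd.preimage hf

theorem AddSubgroup.dense_of_mem_of_int_independent (S : AddSubgroup ℝ) {a b p q : ℝ}
    (hind : ∀ P Q R : ℤ, (P : ℝ) * a + Q * b = R → P = 0 ∧ Q = 0) (hpq : p ≠ 0 ∨ q ≠ 0)
    (hp : p ∈ S) (hq : q ∈ S) (hr : a * p + b * q ∈ S) : Dense (S : Set ℝ) := by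
  refine S.dense_or_cyclic.resolve_right ?_
  rintro ⟨c, rfl⟩
  simp only [AddSubgroup.mem_closure_singleton, zsmul_eq_mul] at hp hq hr
  obtain ⟨P, rfl⟩ := hp
  obtain ⟨Q, rfl⟩ := hq
  obtain ⟨R, hR⟩ := hr
  have hc : c ≠ 0 := by rintro rfl; simp at hpq
  obtain ⟨rfl, rfl⟩ := hind P Q R (mul_right_cancel₀ hc (by linear_combination -hR))
  simp at hpq

theorem Complex.dense_of_forall_smul_mem (H : AddSubgroup ℂ) {u : ℂ} (hu : u ≠ 0)
    (hline : ∀ t : ℝ, t • u ∈ H) {a b : ℝ}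
    (hind : ∀ P Q R : ℤ, (P : ℝ) * a + Q * b = R → P = 0 ∧ Q = 0)
    (h1 : 1 ∈ H) (hI : I ∈ H) (hv : a + b * I ∈ H) : Dense (H : Set ℂ) := by
  let f : ℂ →+ ℝ := imAddGroupHom.comp (AddMonoidHom.mulRight u⁻¹)
  have hf (z : ℂ) : f z = (z * u⁻¹).im := rfl
  refine AddSubgroup.dense_of_ker_le_of_dense_map (f := f)
    (isOpenMap_im.comp (Homeomorph.mulRight₀ u⁻¹ (inv_ne_zero hu)).isOpenMap) ?_ ?_
  · intro z hz
    rw [AddMonoidHom.mem_ker, hf] at hz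
    have hreal : ((z * u⁻¹).re : ℂ) = z * u⁻¹ :=
      Complex.ext (ofReal_re _) (by rw [ofReal_im, hz])
    simpa only [real_smul, hreal, inv_mul_cancel_right₀ hu] using hline (z * u⁻¹).re
  · have hpq : (u⁻¹).im ≠ 0 ∨ (u⁻¹).re ≠ 0 := by
      by_contra! h
      exact inv_ne_zero hu (Complex.ext h.2 h.1)
    refine (H.map f).dense_of_mem_of_int_independent hind hpq ?_ ?_ ?_
    · simpa [hf] using H.mem_map_of_mem f h1
    · simpa [hf] using H.mem_map_of_mem f hI
    · simpa [hf, mul_im] using H.mem_map_of_mem f hv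

/-- if `1, a, b` are linearly independent over `ℚ`, then the additive
subgroup of `ℂ` generated by `1`, `i`, and `a + ib` is dense in `ℂ`. -/
theorem dense_subgroup_of_rationally_independent (a b : ℝ)
    (hind : ∀ q₀ q₁ q₂ : ℚ, (q₀ : ℝ) + (q₁ : ℝ) * a + (q₂ : ℝ) * b = 0 →
      q₀ = 0 ∧ q₁ = 0 ∧ q₂ = 0) :
    Dense {z : ℂ | ∃ m n k : ℤ,
      z = (m : ℂ) + (n : ℂ) * Complex.I + (k : ℂ) * ((a : ℂ) + (b : ℂ) * Complex.I)} := by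
  have ha : Irrational a := by
    rintro ⟨q, rfl⟩
    simpa using (hind (-q) 1 0 (by push_cast; ring)).2.1
  have hindZ : ∀ P Q R : ℤ, (P : ℝ) * a + Q * b = R → P = 0 ∧ Q = 0 := fun P Q R h => by
    obtain ⟨-, hP, hQ⟩ := hind (-R) P Q (by push_cast; linarith)
    exact ⟨by exact_mod_cast hP, by exact_mod_cast hQ⟩
  set G := gaussianLatticeAdjoin (a + b * I)
  change Dense (G : Set ℂ)
  let H := G.topologicalClosure
  obtain ⟨w, hwH, hw⟩ := H.exists_tendsto_zero_of_injective
    (s := fun k : ℕ => ((Int.fract (k * a) : ℝ) : ℂ) + (Int.fract (k * b) : ℝ) * I)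
    (fun k k' h => ha.injective_fract_natCast_mul (by simpa using congrArg re h))
    (fun k => G.le_topologicalClosure
      (by exact_mod_cast fract_add_fract_mul_I_mem_gaussianLatticeAdjoin a b k))
    (isBounded_iff_forall_norm_le.2
      ⟨2, forall_mem_range.2 fun k => norm_fract_add_fract_mul_I_le _ _⟩)
  obtain ⟨u, hu, hline⟩ := H.exists_ne_zero_forall_smul_mem G.isClosed_topologicalClosure hwH hw
  rw [← dense_closure, ← G.topologicalClosure_coe]
  exact Complex.dense_of_forall_smul_mem H hu hline hindZ
    (G.le_topologicalClosure ⟨1, 0, 0, by simp⟩) (G.le_topologicalClosure ⟨0, 1, 0, by simp⟩)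
    (G.le_topologicalClosure ⟨0, 0, 1, by simp⟩)
end

section
/- There exist four pairwise distinct complex numbers e_0, e_1, e_2, e_3 such that, for the monic quartic f(w) := ∏_{j=0}^{3}(w − e_j), the additive subgroup of ℂ generated by the four reciprocal derivatives 1/f′(e_0), 1/f′(e_1), 1/f′(e_2), 1/f′(e_3) is dense in ℂ. (Hence the case of the branching-set closure equal to all of ℂ is actually realized by polynomial vector fields.) -/
/-!
Let `β` be a non-real root of `β³ = β + 1`; its modulus is `ρ^(-1/2) < 1`, where `ρ ≈ 1.3247`
is the real root. For the roots `e = (1 - β² - iβ, 1 - β² + i, 1, 0)` one has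
`f'(e₀) = β f'(e₁) = β² f'(e₂)`, so with `c = 1 / f'(e₀)` the group contains `c, cβ, cβ²`, and,
by the recurrence `β^(n+3) = β^(n+1) + β^n`, every `cβⁿ`. Since `β` is not real, `cβⁿℤ + cβⁿ⁺¹ℤ`
is a lattice whose points lie within `|c||β|ⁿ` of every complex number, and `|β|ⁿ → 0`.
-/

open Finset Complex

theorem deriv_prod_sub_eq_prod_erase {𝕜 ι : Type*} [NontriviallyNormedField 𝕜] [Fintype ι]
    [DecidableEq ι] (e : ι → 𝕜) (j : ι) :
    deriv (fun w => ∏ k, (w - e k)) (e j) = ∏ k ∈ univ.erase j, (e j - e k) := by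
  rw [(HasDerivAt.fun_finsetProd fun k _ => (hasDerivAt_id' (e j)).sub_const (e k)).deriv,
    sum_eq_single j (fun k _ hkj => ?_) (by simp)]
  · simp
  · simpa using prod_eq_zero (f := fun i => e j - e i) (mem_erase.2 ⟨hkj.symm, mem_univ j⟩)
      (sub_self (e j))

theorem AddSubmonoid.mul_pow_mem_of_pow_three_eq {R : Type*} [Semiring R] (S : AddSubmonoid R)
    {c β : R} (hβ : β ^ 3 = β + 1) (h₀ : c ∈ S) (h₁ : c * β ∈ S) (h₂ : c * β ^ 2 ∈ S) :
    ∀ n, c * β ^ n ∈ S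
  | 0 => by simpa using h₀
  | 1 => by simpa using h₁
  | 2 => h₂
  | n + 3 => by
    rw [pow_add, hβ, mul_add, mul_one, ← pow_succ, mul_add]
    exact S.add_mem (mul_pow_mem_of_pow_three_eq S hβ h₀ h₁ h₂ (n + 1))
      (mul_pow_mem_of_pow_three_eq S hβ h₀ h₁ h₂ n)

theorem Complex.exists_ofReal_add_ofReal_mul_eq {β : ℂ} (hβ : β.im ≠ 0) (w : ℂ) :
    ∃ p q : ℝ, (p : ℂ) + q * β = w :=
  ⟨w.re - w.im / β.im * β.re, w.im / β.im, by apply Complex.ext <;> simp [hβ]⟩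

theorem exists_zsmul_add_zsmul_mul_dist_le {u β : ℂ} (hu : u ≠ 0) (hβ : β.im ≠ 0) (z : ℂ) :
    ∃ m k : ℤ, dist z (m • u + k • (u * β)) ≤ ‖u‖ * ((1 + ‖β‖) / 2) := by
  obtain ⟨p, q, hpq⟩ := Complex.exists_ofReal_add_ofReal_mul_eq hβ (z / u)
  refine ⟨round p, round q, ?_⟩
  have hz : z - (round p • u + round q • (u * β)) =
      u * ((p - round p : ℝ) + (q - round q : ℝ) * β) := by
    rw [← mul_div_cancel₀ z hu, ← hpq]
    push_cast
    ring
  calc dist z (round p • u + round q • (u * β))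
      = ‖u‖ * ‖((p - round p : ℝ) : ℂ) + (q - round q : ℝ) * β‖ := by
        rw [dist_eq_norm, hz, norm_mul]
    _ ≤ ‖u‖ * (|p - round p| + |q - round q| * ‖β‖) := by
        gcongr
        refine (norm_add_le _ _).trans_eq ?_
        rw [norm_mul, norm_real, norm_real, Real.norm_eq_abs, Real.norm_eq_abs]
    _ ≤ ‖u‖ * (1 / 2 + 1 / 2 * ‖β‖) := by
        gcongr
        · exact abs_sub_round p
        · exact abs_sub_round q
    _ = ‖u‖ * ((1 + ‖β‖) / 2) := by ring

theorem AddSubgroup.dense_of_forall_mul_pow_mem {S : AddSubgroup ℂ} {c β : ℂ} (hc : c ≠ 0)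
    (hβim : β.im ≠ 0) (hβ : ‖β‖ < 1) (hS : ∀ n, c * β ^ n ∈ S) : Dense (S : Set ℂ) := by
  have hβ₀ : β ≠ 0 := by rintro rfl; simp at hβim
  rw [Metric.dense_iff]
  intro z ε hε
  obtain ⟨n, hn⟩ := exists_pow_lt_of_lt_one (div_pos hε (norm_pos_iff.2 hc)) hβ
  obtain ⟨m, k, hmk⟩ :=
    exists_zsmul_add_zsmul_mul_dist_le (mul_ne_zero hc (pow_ne_zero n hβ₀)) hβim z
  refine ⟨m • (c * β ^ n) + k • (c * β ^ n * β), ?_, S.add_mem (S.zsmul_mem (hS n) m) ?_⟩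
  · rw [Metric.mem_ball, dist_comm]
    calc _ ≤ ‖c * β ^ n‖ * ((1 + ‖β‖) / 2) := hmk
      _ ≤ ‖c * β ^ n‖ := mul_le_of_le_one_right (norm_nonneg _) (by linarith)
      _ < ε := by
        rw [norm_mul, norm_pow]
        exact (lt_div_iff₀' (norm_pos_iff.2 hc)).1 hn
  · rw [mul_assoc, ← pow_succ]
    exact S.zsmul_mem (hS (n + 1)) k

theorem exists_pow_three_eq_add_one :
    ∃ β : ℂ, β ^ 3 = β + 1 ∧ β.re < 0 ∧ 0 < β.im ∧ ‖β‖ < 1 := by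
  obtain ⟨r, ⟨hr₁, hr₂⟩, hr⟩ : ∃ r ∈ Set.Icc (6 / 5 : ℝ) (7 / 5), r ^ 3 - r - 1 = 0 :=
    intermediate_value_Icc (by norm_num) (by fun_prop) ⟨by norm_num, by norm_num⟩
  have ht : √(3 * r ^ 2 - 4) ^ 2 = 3 * r ^ 2 - 4 := Real.sq_sqrt (by nlinarith)
  have ht₀ : 0 < √(3 * r ^ 2 - 4) := Real.sqrt_pos.2 (by nlinarith)
  set t := √(3 * r ^ 2 - 4)
  -- `X³ - X - 1 = (X - r)(X² + rX + r² - 1)`, and `(-r ± ti)/2` are the roots of the quadratic.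
  refine ⟨((-r : ℝ) + t * I) / 2, ?_, ?_, ?_, ?_⟩
  · have htC : (t : ℂ) ^ 2 = 3 * r ^ 2 - 4 := by exact_mod_cast ht
    have hrC : (r : ℂ) ^ 3 - r - 1 = 0 := by exact_mod_cast hr
    push_cast
    linear_combination ((-r + t * I) / 2 - r) * t ^ 2 / 4 * I_sq
      - ((-r + t * I) / 2 - r) / 4 * htC + hrC
  · linarith [show (((-r : ℝ) + t * I) / 2).re = -r / 2 by simp]
  · simpa using ht₀
  · rw [norm_div, norm_add_mul_I, Complex.norm_ofNat, div_lt_one two_pos, Real.sqrt_lt' two_pos]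
    nlinarith

def quarticRoots (β : ℂ) : Fin 4 → ℂ := ![1 - β ^ 2 - I * β, 1 - β ^ 2 + I, 1, 0]

theorem quarticRoots_injective {β : ℂ} (hre : β.re < 0) (him : 0 < β.im) :
    Function.Injective (quarticRoots β) := by
  have hx : (1 - β ^ 2 - I * β).im = -β.re * (2 * β.im + 1) := by
    simp only [sq, sub_im, one_im, mul_im, I_re, I_im]; ring
  have hy : (1 - β ^ 2 + I).im = 1 - 2 * β.re * β.im := by
    simp only [sq, add_im, sub_im, one_im, mul_im, I_im]; ring
  have hre_sub : (1 - β ^ 2 - I * β).re - (1 - β ^ 2 + I).re = β.im := by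
    simp only [sub_re, add_re, mul_re, I_re, I_im, one_re]; ring
  have hne : ∀ z : ℂ, 0 < z.im → z ≠ 0 ∧ z ≠ 1 := fun z hz =>
    ⟨fun h => by simp [h] at hz, fun h => by simp [h] at hz⟩
  obtain ⟨hx₀, hx₁⟩ := hne _ (by rw [hx]; nlinarith)
  obtain ⟨hy₀, hy₁⟩ := hne _ (by rw [hy]; nlinarith)
  have hxy : 1 - β ^ 2 - I * β ≠ 1 - β ^ 2 + I := fun h => by simp [h] at hre_sub; linarith
  simp only [quarticRoots, Matrix.vecCons, Fin.cons_injective_iff]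
  simp [Function.Injective, hxy, hx₀, hx₁, hy₀, hy₁]

theorem prod_erase_sub_quarticRoots_zero {β : ℂ} (hβ : β ^ 3 = β + 1) :
    ∏ k ∈ univ.erase 0, (quarticRoots β 0 - quarticRoots β k) =
      β * ∏ k ∈ univ.erase 1, (quarticRoots β 1 - quarticRoots β k) ∧
    ∏ k ∈ univ.erase 0, (quarticRoots β 0 - quarticRoots β k) =
      β ^ 2 * ∏ k ∈ univ.erase 2, (quarticRoots β 2 - quarticRoots β k) := by
  rw [show univ.erase (0 : Fin 4) = {1, 2, 3} by decide,
    show univ.erase (1 : Fin 4) = {0, 2, 3} by decide,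
    show univ.erase (2 : Fin 4) = {0, 1, 3} by decide]
  simp only [quarticRoots, prod_insert, prod_singleton, mem_insert, mem_singleton, Fin.reduceEq,
    or_self, not_false_eq_true, Matrix.cons_val]
  constructor
  · linear_combination (-I * β * (β + 1) ^ 2) * (hβ + I_sq)
  · linear_combination (β - 2 * I * β ^ 2 - β ^ 3) * hβ
      + (β + β ^ 2 - I * β ^ 2 - β ^ 3 - I * β ^ 3 - 2 * β ^ 4) * I_sq

/-- there is a monic quartic `f(w) = ∏ j, (w - e j)` with four pairwise
distinct zeros such that the additive subgroup of `ℂ` generated by the four reciprocal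
derivatives `1/f'(e_j)` is dense in `ℂ` (realizing the fifth case `B = ℂ` of the
branching-set classification). -/
theorem exists_quartic_with_dense_period_group :
    ∃ e : Fin 4 → ℂ, Function.Injective e ∧
      Dense ((AddSubgroup.closure (Set.range fun j : Fin 4 =>
        (deriv (fun w : ℂ => ∏ k, (w - e k)) (e j))⁻¹) : AddSubgroup ℂ) : Set ℂ) := by
  obtain ⟨β, hβ, hre, him, hnorm⟩ := exists_pow_three_eq_add_one
  have hβ₀ : β ≠ 0 := by rintro rfl; norm_num at hβ
  have hinj := quarticRoots_injective hre him
  obtain ⟨h₀₁, h₀₂⟩ := prod_erase_sub_quarticRoots_zero hβ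
  refine ⟨quarticRoots β, hinj, ?_⟩
  simp_rw [deriv_prod_sub_eq_prod_erase]
  have hP₀ : ∏ k ∈ univ.erase 0, (quarticRoots β 0 - quarticRoots β k) ≠ 0 :=
    prod_ne_zero_iff.2 fun k hk => sub_ne_zero.2 (hinj.ne (ne_of_mem_erase hk).symm)
  refine AddSubgroup.dense_of_forall_mul_pow_mem (inv_ne_zero hP₀) him.ne' hnorm
    (AddSubmonoid.mul_pow_mem_of_pow_three_eq _ hβ (AddSubgroup.subset_closure ⟨0, rfl⟩) ?_ ?_)
  · rw [h₀₁, mul_inv_rev, inv_mul_cancel_right₀ hβ₀]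
    exact AddSubgroup.subset_closure ⟨1, rfl⟩
  · rw [h₀₂, mul_inv_rev, inv_mul_cancel_right₀ (pow_ne_zero 2 hβ₀)]
    exact AddSubgroup.subset_closure ⟨2, rfl⟩
end

section
/- Let f be a complex polynomial of degree d ≥ 2. Then there is no differentiable function w : [0,∞) → ℂ with w′(t) = f(w(t)) for all t ≥ 0 and ‖w(t)‖ → ∞ as t → +∞. In other words, a real-time solution of ẇ = f(w) cannot escape to infinity in infinite forward time: escape to w = ∞ occurs, if at all, only by blow-up in finite time. -/
/-! If `w` escaped to infinity in infinite time, `s = w ^ (1 - d)` would tend to `0`. But along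
the flow `ṡ = (1 - d) f(w) / w ^ d`, which tends to `(1 - d)` times the leading coefficient of
`f` as `w → ∞`; a function whose derivative has a nonzero limit grows linearly, contradiction. -/

open Filter Topology Bornology Set

theorem Polynomial.eval_reverse_inv {K : Type*} [Field K] (f : Polynomial K) {z : K} (hz : z ≠ 0) :
    f.reverse.eval z⁻¹ = f.eval z / z ^ f.natDegree := by
  have := invertibleOfNonzero hz
  simpa [eq_div_iff (pow_ne_zero _ hz), Polynomial.eval₂_id] using
    Polynomial.eval₂_reverse_mul_pow (RingHom.id K) z f

theorem Polynomial.tendsto_eval_div_pow_natDegree_cobounded {𝕜 : Type*} [NormedField 𝕜]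
    (f : Polynomial 𝕜) :
    Tendsto (fun z => f.eval z / z ^ f.natDegree) (cobounded 𝕜) (𝓝 f.leadingCoeff) := by
  have hrev : Tendsto (fun z => f.reverse.eval z⁻¹) (cobounded 𝕜) (𝓝 f.leadingCoeff) := by
    have := (f.reverse.continuous.tendsto 0).comp tendsto_inv₀_cobounded
    rwa [← Polynomial.coeff_zero_eq_eval_zero, Polynomial.coeff_zero_reverse] at this
  refine hrev.congr' ?_
  filter_upwards [eventually_ne_cobounded 0] with z hz
  exact f.eval_reverse_inv hz

theorem HasDerivAt.zpow_one_sub_natCast {𝕜 : Type*} [NontriviallyNormedField 𝕜]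
    [NormedAlgebra ℝ 𝕜] {w : ℝ → 𝕜} {w' : 𝕜} {t : ℝ} (d : ℕ) (hw : HasDerivAt w w' t)
    (h0 : w t ≠ 0) :
    HasDerivAt (fun t => w t ^ (1 - d : ℤ)) ((1 - d) * (w' / w t ^ d)) t := by
  refine ((hasDerivAt_zpow (1 - d : ℤ) (w t) (Or.inl h0)).comp t hw).congr_deriv ?_
  rw [sub_sub_cancel_left, zpow_neg, zpow_natCast]
  push_cast
  ring

theorem tendsto_norm_atTop_of_tendsto_deriv {E : Type*} [NormedAddCommGroup E] [NormedSpace ℝ E]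
    {s s' : ℝ → E} {c : E} (hs : ∀ᶠ t in atTop, HasDerivAt s (s' t) t)
    (hs' : Tendsto s' atTop (𝓝 c)) (hc : c ≠ 0) :
    Tendsto (fun t => ‖s t‖) atTop atTop := by
  have hc2 : 0 < ‖c‖ / 2 := by positivity
  obtain ⟨T, hT⟩ := eventually_atTop.1 <| hs.and <|
    (tendsto_iff_norm_sub_tendsto_zero.1 hs').eventually (eventually_le_nhds hc2)
  have hdeviation : ∀ t ≥ T, ‖s t - (t - T) • c - s T‖ ≤ ‖c‖ / 2 * (t - T) := by
    intro t ht
    have hderiv : ∀ x ∈ Icc T t,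
        HasDerivWithinAt (fun x => s x - (x - T) • c) (s' x - c) (Icc T t) x := fun x hx => by
      have := (hT x hx.1).1.sub (((hasDerivAt_id x).sub_const T).smul_const c)
      rw [one_smul] at this
      exact this.hasDerivWithinAt
    simpa using norm_image_sub_le_of_norm_deriv_le_segment' hderiv
      (fun x hx => (hT x hx.1).2) t ⟨ht, le_rfl⟩
  refine tendsto_atTop_mono' atTop ?_ <| tendsto_atTop_add_const_right _ (-(‖c‖ / 2 * T + ‖s T‖))
    (tendsto_id.const_mul_atTop hc2)
  filter_upwards [eventually_ge_atTop T] with t ht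
  have htri : ‖(t - T) • c‖ ≤ ‖s t - (t - T) • c - s T‖ + (‖s t‖ + ‖s T‖) := by
    calc ‖(t - T) • c‖ = ‖(s t - s T) - (s t - (t - T) • c - s T)‖ := by congr 1; abel
      _ ≤ ‖s t - s T‖ + ‖s t - (t - T) • c - s T‖ := norm_sub_le _ _
      _ ≤ _ := by linarith [norm_sub_le (s t) (s T)]
  rw [norm_smul, Real.norm_of_nonneg (sub_nonneg.2 ht)] at htri
  simp only [id]
  linarith [hdeviation t ht]

/-- for a complex polynomial `f` of degree `d ≥ 2`, no real-time solution
of `ẇ = f(w)` on `[0,∞)` can escape to infinity in infinite forward time. -/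
theorem no_escape_to_infinity_in_infinite_time
    (f : Polynomial ℂ) (hf : 2 ≤ f.natDegree) :
    ¬ ∃ w : ℝ → ℂ,
        (∀ t ∈ Set.Ici (0 : ℝ), HasDerivWithinAt w (f.eval (w t)) (Set.Ici 0) t) ∧
        Tendsto (fun t => ‖w t‖) atTop atTop := by
  rintro ⟨w, hw, hlim⟩
  set d := f.natDegree
  have hw_cobounded : Tendsto w atTop (cobounded ℂ) := tendsto_norm_atTop_iff_cobounded.1 hlim
  have hs : ∀ᶠ t in atTop,
      HasDerivAt (fun t => w t ^ (1 - d : ℤ)) ((1 - d) * (f.eval (w t) / w t ^ d)) t := by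
    filter_upwards [eventually_gt_atTop 0, hw_cobounded.eventually (eventually_ne_cobounded 0)]
      with t ht hwt
    exact ((hw t ht.le).hasDerivAt (Ici_mem_nhds ht)).zpow_one_sub_natCast d hwt
  have hs' : Tendsto (fun t => (1 - d) * (f.eval (w t) / w t ^ d)) atTop
      (𝓝 ((1 - d) * f.leadingCoeff)) :=
    (f.tendsto_eval_div_pow_natDegree_cobounded.comp hw_cobounded).const_mul _
  have hc : (1 - d) * f.leadingCoeff ≠ 0 :=
    mul_ne_zero (sub_ne_zero.2 (mod_cast (by omega : 1 ≠ d)))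
      (Polynomial.leadingCoeff_ne_zero.2 (Polynomial.ne_zero_of_natDegree_gt hf))
  have hdecay : Tendsto (fun t => ‖w t ^ (1 - d : ℤ)‖) atTop (𝓝 0) := by
    simp_rw [norm_zpow]
    exact (tendsto_zpow_atTop_zero (by omega)).comp hlim
  exact not_tendsto_nhds_of_tendsto_atTop (tendsto_norm_atTop_of_tendsto_deriv hs hs' hc) 0 hdecay
end
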